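/- arXiv:1310.1056 — 9 statements merged into one kernel-verified Lean document; each statement's English description precedes it below -/
import Mathlib

section
/- Let p be an idempotent ultrafilter on a commutative semigroup X and let f : X → Y be a p-almost polynomial with Y a commutative group. If d ≥ deg^p f then C_{d+1}(f) = C_d(f); consequently C_d(f) is independent of d for all d ≥ deg^p f. -/
open Filter

namespace AP

variable {X : Type*} [AddCommSemigroup X] {Y : Type*} [AddCommGroup Y]

/-- The relativised difference operator `Δ̄ₐ f (x) = f (x + a) - f x - f a`. -/
def Dbar (a : X) (f : X → Y) : X → Y := fun x => f (x + a) - f x - f a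

/-- The iterated difference `Δ̄^d f (m_0, …, m_d)`, where the first argument `w 0` is the
parameter of the outermost difference and the last argument is the evaluation point. -/
def DeltaFull : ∀ (d : ℕ), (X → Y) → (Fin (d + 1) → X) → Y
  | 0, f, w => f (w 0)
  | d + 1, f, w => DeltaFull d (Dbar (w 0) f) fun i => w i.succ

/-- The iterated `p`-limit of a function of `r` variables, taken in the discrete topology on the
target: the limit exists with value `c` iff, iteratively, the value is `c` `p`-almost
everywhere.  The outermost limit is taken over the first variable. -/
def IterLim {Z : Type*} (p : Ultrafilter X) : ∀ (r : ℕ), ((Fin r → X) → Z) → Z → Prop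
  | 0, g, c => g (fun i => i.elim0) = c
  | r + 1, g, c => ∀ᶠ a in (p : Filter X), IterLim p r (fun v => g (Fin.cons a v)) c

/-- `HasC p d f c` asserts that the constant
`C_d(f) = (-1)^d ⋅ p-lim_{m_0,…,m_d} Δ̄^d f (m_0,…,m_d)` exists and equals `c`. -/
def HasC (p : Ultrafilter X) (d : ℕ) (f : X → Y) (c : Y) : Prop :=
  IterLim p (d + 1) (DeltaFull d f) (((-1 : ℤ) ^ d) • c)

/-- `f` is a `p`-almost polynomial of degree at most `d`: for `d = 0` this means `f` is constant
`p`-a.e. (degree `-∞` corresponding to the constant `0`), and for `d + 1` it means that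
`Δ̄ₐ f` has degree at most `d` for `p`-almost all `a`. -/
def APdegLE (p : Ultrafilter X) : ℕ → (X → Y) → Prop
  | 0, f => ∃ c, ∀ᶠ x in (p : Filter X), f x = c
  | d + 1, f => ∀ᶠ a in (p : Filter X), APdegLE p d (Dbar a f)

/-- Addition of ultrafilters: `A ∈ p + q` iff `∀ᶠ m in p, ∀ᶠ n in q, n + m ∈ A`, so that
`(p+q)-lim_n g n = p-lim_m q-lim_n g (n + m)`. -/
def UFAdd (p q : Ultrafilter X) : Ultrafilter X := p.bind fun m => q.map fun n => n + m

/-- An ultrafilter is idempotent if `p + p = p`. -/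
def IsIdem (p : Ultrafilter X) : Prop := UFAdd p p = p

end AP

namespace AP

variable {X : Type*} [AddCommSemigroup X] {Y : Type*} [AddCommGroup Y]

/-! ### Auxiliary lemmas -/

lemma idem_ev {p : Ultrafilter X} (hp : IsIdem p) {P : X → Prop}
    (h : ∀ᶠ x in (p : Filter X), P x) :
    ∀ᶠ m in (p : Filter X), ∀ᶠ n in (p : Filter X), P (n + m) := by
  have h' : {x | P x} ∈ p := h
  rw [← hp] at h'
  exact h'

lemma hasC_zero_iff {p : Ultrafilter X} {f : X → Y} {c : Y} :
    HasC p 0 f c ↔ ∀ᶠ m in (p : Filter X), f m = c := by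
  simp only [HasC, IterLim, DeltaFull, Fin.cons_zero, pow_zero, one_smul]

lemma hasC_succ_iff {p : Ultrafilter X} {d : ℕ} {f : X → Y} {c : Y} :
    HasC p (d + 1) f c ↔ ∀ᶠ a in (p : Filter X), HasC p d (Dbar a f) (-c) := by
  have hsign : ((-1 : ℤ) ^ (d + 1)) • c = ((-1 : ℤ) ^ d) • (-c) := by
    rw [pow_succ, mul_smul]; simp
  unfold HasC
  rw [hsign]
  show (∀ᶠ a in (p : Filter X),
      IterLim p (d + 1) (fun v => DeltaFull (d + 1) f (Fin.cons a v)) _) ↔ _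
  refine eventually_congr (Eventually.of_forall fun a => ?_)
  have : (fun v : Fin (d + 1) → X => DeltaFull (d + 1) f (Fin.cons a v))
      = DeltaFull d (Dbar a f) := by
    funext v
    simp only [DeltaFull, Fin.cons_zero]
    congr 1
  rw [this]

lemma key {p : Ultrafilter X} (hp : IsIdem p) :
    ∀ (d : ℕ) (f : X → Y), APdegLE p d f → ∀ c, (HasC p (d + 1) f c ↔ HasC p d f c) := by
  intro d
  induction d with
  | zero =>
    intro f hf c
    obtain ⟨c0, hc0⟩ := hf
    have h2 : ∀ᶠ m in (p : Filter X), ∀ᶠ n in (p : Filter X), f (n + m) = c0 := idem_ev hp hc0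
    rw [hasC_succ_iff, hasC_zero_iff]
    constructor
    · intro H
      simp only [hasC_zero_iff] at H
      have hcc : c = c0 := by
        obtain ⟨m, ⟨hm1, hm2⟩, hm3⟩ := ((H.and h2).and hc0).exists
        obtain ⟨n, ⟨hn1, hn2⟩, hn3⟩ := ((hm1.and hm2).and hc0).exists
        have : Dbar m f n = -c := hn1
        rw [Dbar] at this
        simp only [hn2, hn3, hm3] at this
        have : -c0 = -c := by rw [← this]; abel
        exact (neg_injective this).symm
      exact hcc ▸ hc0
    · intro H
      have hcc : c = c0 := by
        obtain ⟨x, hx1, hx2⟩ := (H.and hc0).exists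
        rw [← hx1, hx2]
      subst hcc
      filter_upwards [h2, hc0] with m hm1 hm2
      rw [hasC_zero_iff]
      filter_upwards [hm1, hc0] with n hn1 hn2
      rw [Dbar]
      simp only [hn1, hn2, hm2]
      abel
  | succ d ih =>
    intro f hf c
    rw [hasC_succ_iff, hasC_succ_iff]
    refine eventually_congr ?_
    filter_upwards [hf] with a ha
    exact ih (Dbar a f) ha (-c)

lemma degLE_mono {p : Ultrafilter X} (hp : IsIdem p) :
    ∀ (d : ℕ) (f : X → Y), APdegLE p d f → APdegLE p (d + 1) f := by
  intro d
  induction d with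
  | zero =>
    intro f hf
    obtain ⟨c0, hc0⟩ := hf
    show ∀ᶠ a in (p : Filter X), APdegLE p 0 (Dbar a f)
    filter_upwards [idem_ev hp hc0, hc0] with a ha1 ha2
    refine ⟨-c0, ?_⟩
    filter_upwards [ha1, hc0] with x hx1 hx2
    rw [Dbar]
    simp only [hx1, hx2, ha2]
    abel
  | succ d ih =>
    intro f hf
    show ∀ᶠ a in (p : Filter X), APdegLE p (d + 1) (Dbar a f)
    filter_upwards [hf] with a ha
    exact ih (Dbar a f) ha

lemma degLE_of_le {p : Ultrafilter X} (hp : IsIdem p) {d e : ℕ} (hde : d ≤ e)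
    {f : X → Y} (hf : APdegLE p d f) : APdegLE p e f := by
  induction e, hde using Nat.le_induction with
  | base => exact hf
  | succ e he ih => exact degLE_mono hp e f ih

end AP

/-- for an idempotent `p` and a `p`-almost polynomial `f` of degree at most `d`,
`C_{d+1}(f) = C_d(f)`, and consequently `C_e(f) = C_d(f)` for all `e ≥ d`. -/
theorem stmt_2 {X : Type*} [AddCommSemigroup X] {Y : Type*} [AddCommGroup Y]
    (p : Ultrafilter X) (hp : AP.IsIdem p) (f : X → Y) (d : ℕ) (hf : AP.APdegLE p d f) :
    (∀ c : Y, AP.HasC p (d + 1) f c ↔ AP.HasC p d f c) ∧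
    (∀ e : ℕ, d ≤ e → ∀ c : Y, AP.HasC p e f c ↔ AP.HasC p d f c) := by
  refine ⟨AP.key hp d f hf, ?_⟩
  intro e he
  induction e, he using Nat.le_induction with
  | base => exact fun c => Iff.rfl
  | succ e he ih =>
    intro c
    exact (AP.key hp e f (AP.degLE_of_le hp he hf) c).trans (ih c)
end

section
/- Let p be an idempotent ultrafilter on a commutative semigroup X, Y a commutative group, and f, g : X → Y maps with f = g p-almost everywhere. Then deg^p f = deg^p g, and C(f) = C(g) whenever either is defined. -/
open Filter

section Aux


variable {X : Type*} [AddCommSemigroup X] {Y : Type*} [AddCommGroup Y]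

lemma AP.dbar_ae (p : Ultrafilter X) (hp : AP.IsIdem p)
    {f g : X → Y} (hfg : ∀ᶠ x in (p : Filter X), f x = g x) :
    ∀ᶠ a in (p : Filter X), ∀ᶠ x in (p : Filter X), AP.Dbar a f x = AP.Dbar a g x := by
  have h1 : ∀ᶠ a in (p : Filter X), ∀ᶠ x in (p : Filter X), f (x + a) = g (x + a) := by
    have h := hfg
    rw [← hp] at h
    have hcoe : ((AP.UFAdd p p : Ultrafilter X) : Filter X)
        = (p : Filter X).bind fun m => Filter.map (fun n => n + m) (p : Filter X) := rfl
    rw [hcoe, Filter.eventually_bind] at h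
    exact h.mono fun a ha => ha
  filter_upwards [h1, hfg] with a ha hfa
  filter_upwards [ha, hfg] with x hx hfx
  simp [AP.Dbar, hx, hfx, hfa]

lemma AP.apdegLE_congr (p : Ultrafilter X) (hp : AP.IsIdem p) :
    ∀ (d : ℕ) {f g : X → Y}, (∀ᶠ x in (p : Filter X), f x = g x) →
      (AP.APdegLE p d f ↔ AP.APdegLE p d g)
  | 0, f, g, hfg => by
    constructor <;> rintro ⟨c, hc⟩ <;> exact ⟨c, by filter_upwards [hc, hfg] with x h1 h2 <;>
      simp_all⟩
  | d + 1, f, g, hfg => by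
    show (∀ᶠ a in (p : Filter X), _) ↔ _
    refine eventually_congr ?_
    filter_upwards [AP.dbar_ae p hp hfg] with a ha
    exact AP.apdegLE_congr p hp d ha

lemma AP.iterLim_delta_congr (p : Ultrafilter X) (hp : AP.IsIdem p) :
    ∀ (d : ℕ) {f g : X → Y}, (∀ᶠ x in (p : Filter X), f x = g x) → ∀ (c : Y),
      (AP.IterLim p (d + 1) (AP.DeltaFull d f) c ↔ AP.IterLim p (d + 1) (AP.DeltaFull d g) c)
  | 0, f, g, hfg, c => by
    show (∀ᶠ a in (p : Filter X), _) ↔ (∀ᶠ a in (p : Filter X), _)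
    refine eventually_congr ?_
    filter_upwards [hfg] with a ha
    simp [AP.IterLim, AP.DeltaFull, ha]
  | d + 1, f, g, hfg, c => by
    show (∀ᶠ a in (p : Filter X), _) ↔ (∀ᶠ a in (p : Filter X), _)
    refine eventually_congr ?_
    filter_upwards [AP.dbar_ae p hp hfg] with a ha
    have e1 : ∀ (h : X → Y), (fun v => AP.DeltaFull (d + 1) h (Fin.cons a v))
        = AP.DeltaFull d (AP.Dbar a h) := by
      intro h
      funext v
      show AP.DeltaFull d (AP.Dbar ((Fin.cons a v : Fin (d+2) → X) 0) h)
          (fun i => (Fin.cons a v : Fin (d+2) → X) i.succ) = _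
      simp [Fin.cons_zero, Fin.cons_succ]
    rw [e1, e1]
    exact AP.iterLim_delta_congr p hp d ha c

end Aux

theorem stmt_5 {X : Type*} [AddCommSemigroup X] {Y : Type*} [AddCommGroup Y]
    (p : Ultrafilter X) (hp : AP.IsIdem p) (f g : X → Y)
    (hfg : ∀ᶠ x in (p : Filter X), f x = g x) :
    ((∀ᶠ x in (p : Filter X), f x = 0) ↔ (∀ᶠ x in (p : Filter X), g x = 0)) ∧
    (∀ d : ℕ, AP.APdegLE p d f ↔ AP.APdegLE p d g) ∧
    (∀ (d : ℕ) (c : Y), AP.HasC p d f c ↔ AP.HasC p d g c) := by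
  refine ⟨?_, fun d => AP.apdegLE_congr p hp d hfg, fun d c => AP.iterLim_delta_congr p hp d hfg _⟩
  constructor <;> intro h <;> filter_upwards [h, hfg] with x h1 h2 <;> simp_all
end

section
/- Let p be an idempotent ultrafilter on ℤ and f : ℤ → ℤ a p-almost polynomial. Then for every α in the torus 𝕋 = ℝ/ℤ, p-lim_n α·f(n) = α·C(f) in 𝕋. In particular, if f is admissible (C(f) = 0), then p-lim_n α·f(n) = 0 in 𝕋. -/
open Filter

section Aux
open Topology

private lemma plim_exists {Y : Type*} [TopologicalSpace Y] [CompactSpace Y]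
    (p : Ultrafilter ℤ) (g : ℤ → Y) : ∃ l, Filter.Tendsto g (p : Filter ℤ) (nhds l) := by
  obtain ⟨x, -, hx⟩ := isCompact_univ.ultrafilter_le_nhds (p.map g) (by simp)
  exact ⟨x, hx⟩

private lemma plim_unique {Y : Type*} [TopologicalSpace Y] [T2Space Y]
    (p : Ultrafilter ℤ) (g : ℤ → Y) {l l' : Y}
    (h : Filter.Tendsto g (p : Filter ℤ) (nhds l))
    (h' : Filter.Tendsto g (p : Filter ℤ) (nhds l')) : l = l' :=
  tendsto_nhds_unique h h'

private lemma tendsto_UFAdd {Y : Type*} [TopologicalSpace Y]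
    (p q : Ultrafilter ℤ) (g h : ℤ → Y) (l : Y)
    (hG : ∀ᶠ m in (p : Filter ℤ), Filter.Tendsto (fun n => g (n + m)) (q : Filter ℤ) (nhds (h m)))
    (hh : Filter.Tendsto h (p : Filter ℤ) (nhds l)) :
    Filter.Tendsto g ((AP.UFAdd p q : Ultrafilter ℤ) : Filter ℤ) (nhds l) := by
  rw [_root_.tendsto_nhds] at hh
  refine _root_.tendsto_nhds.mpr fun U hU hlU => ?_
  have hmem : ∀ᶠ m in (p : Filter ℤ), ∀ᶠ n in (q : Filter ℤ), g (n + m) ∈ U := by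
    filter_upwards [hG, hh U hU hlU] with m hm hmU
    exact hm (hU.mem_nhds hmU)
  show g ⁻¹' U ∈ ((AP.UFAdd p q : Ultrafilter ℤ) : Filter ℤ)
  change g ⁻¹' U ∈ Filter.bind (p : Filter ℤ) fun m' => Filter.map (fun n => n + m') (q : Filter ℤ)
  rw [Filter.mem_bind']
  filter_upwards [hmem] with m hm
  exact hm

private lemma DeltaFull_cons {X : Type*} [AddCommSemigroup X] {Y : Type*} [AddCommGroup Y]
    (d : ℕ) (f : X → Y) (a : X) (v : Fin (d + 1) → X) :
    AP.DeltaFull (d + 1) f (Fin.cons a v) = AP.DeltaFull d (AP.Dbar a f) v := by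
  simp [AP.DeltaFull]

private lemma key (p : Ultrafilter ℤ) (hp : AP.IsIdem p) (α : AddCircle (1 : ℝ)) :
    ∀ (d : ℕ) (f : ℤ → ℤ) (cf : ℤ), AP.APdegLE p d f → AP.HasC p d f cf →
      Filter.Tendsto (fun n : ℤ => f n • α) (p : Filter ℤ) (nhds (cf • α)) := by
  intro d
  induction d with
  | zero =>
    intro f cf _ hc
    have hc' : ∀ᶠ a in (p : Filter ℤ), f a = cf := by
      have : ∀ᶠ a in (p : Filter ℤ),
          AP.IterLim p 0 (fun v => AP.DeltaFull 0 f (Fin.cons a v)) (((-1 : ℤ) ^ 0) • cf) := hc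
      filter_upwards [this] with a ha
      simpa [AP.IterLim, AP.DeltaFull] using ha
    have : ∀ᶠ n in (p : Filter ℤ), f n • α = cf • α := by
      filter_upwards [hc'] with n hn; rw [hn]
    exact Filter.Tendsto.congr' (by filter_upwards [this] with n hn; exact hn.symm)
      tendsto_const_nhds
  | succ d ih =>
    intro f cf hf hc
    -- the unfolded hypotheses
    have hf' : ∀ᶠ a in (p : Filter ℤ), AP.APdegLE p d (AP.Dbar a f) := hf
    have hc' : ∀ᶠ a in (p : Filter ℤ), AP.HasC p d (AP.Dbar a f) (-cf) := by
      have h0 : ∀ᶠ a in (p : Filter ℤ),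
          AP.IterLim p (d + 1) (fun v => AP.DeltaFull (d + 1) f (Fin.cons a v))
            (((-1 : ℤ) ^ (d + 1)) • cf) := hc
      filter_upwards [h0] with a ha
      have heq : (fun v => AP.DeltaFull (d + 1) f (Fin.cons a v))
          = AP.DeltaFull d (AP.Dbar a f) := by
        funext v
        rw [DeltaFull_cons]
      have hval : ((-1 : ℤ) ^ (d + 1)) • cf = ((-1 : ℤ) ^ d) • (-cf) := by
        simp only [smul_eq_mul, pow_succ]; ring
      rw [heq, hval] at ha
      exact ha
    -- inductive conclusion
    have hI : ∀ᶠ m in (p : Filter ℤ),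
        Filter.Tendsto (fun n : ℤ => AP.Dbar m f n • α) (p : Filter ℤ) (nhds ((-cf) • α)) := by
      filter_upwards [hf', hc'] with m h1 h2
      exact ih (AP.Dbar m f) (-cf) h1 h2
    obtain ⟨l, hl⟩ := plim_exists p (fun n : ℤ => f n • α)
    set h : ℤ → AddCircle (1 : ℝ) := fun m => l + f m • α + (-cf) • α with hdef
    have hG : ∀ᶠ m in (p : Filter ℤ),
        Filter.Tendsto (fun n : ℤ => f (n + m) • α) (p : Filter ℤ) (nhds (h m)) := by
      filter_upwards [hI] with m hm
      have hsplit : (fun n : ℤ => f (n + m) • α)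
          = fun n : ℤ => f n • α + f m • α + AP.Dbar m f n • α := by
        funext n
        have : f (n + m) = f n + f m + AP.Dbar m f n := by
          simp only [AP.Dbar]; ring
        rw [this, add_smul, add_smul]
      rw [hsplit]
      exact ((hl.add tendsto_const_nhds).add hm)
    have hh : Filter.Tendsto h (p : Filter ℤ) (nhds (l + l + (-cf) • α)) :=
      (tendsto_const_nhds.add hl).add tendsto_const_nhds
    have hmain := tendsto_UFAdd p p (fun n : ℤ => f n • α) h (l + l + (-cf) • α) hG hh
    rw [hp] at hmain
    have hle : l = l + l + (-cf) • α := plim_unique p _ hl hmain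
    have h3 : l + (-cf) • α = 0 := by
      have h2 : l + (l + (-cf) • α) = l + 0 := by rw [add_zero, ← add_assoc]; exact hle.symm
      exact add_left_cancel h2
    have hcf : l = cf • α := by
      have := eq_neg_of_add_eq_zero_left h3
      simpa [neg_smul] using this
    rwa [hcf] at hl

end Aux

/-- for an idempotent `p` on `ℤ` and a `p`-almost polynomial `f : ℤ → ℤ` with
constant `C(f) = cf`, for every `α` in the torus `𝕋 = ℝ/ℤ` one has
`p-lim_n α·f(n) = α·C(f)`; in particular if `f` is admissible then `p-lim_n α·f(n) = 0`. -/
theorem stmt_11 (p : Ultrafilter ℤ) (hp : AP.IsIdem p) (f : ℤ → ℤ) (d : ℕ)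
    (hf : AP.APdegLE p d f) (cf : ℤ) (hc : AP.HasC p d f cf) :
    ∀ α : AddCircle (1 : ℝ),
      Filter.Tendsto (fun n : ℤ => f n • α) (p : Filter ℤ) (nhds (cf • α)) ∧
      (cf = 0 → Filter.Tendsto (fun n : ℤ => f n • α) (p : Filter ℤ) (nhds 0)) := by
  intro α
  have h1 := key p hp α d f cf hf hc
  refine ⟨h1, fun h0 => ?_⟩
  rw [h0] at h1
  simpa using h1
end

section
/- Let p be an idempotent ultrafilter on ℤ, α_1,…,α_N ∈ ℝ, and f_1,…,f_N : ℤ → ℤ p-almost polynomials with |∑_{i=1}^N α_i C(f_i)| < 1/2. Setting g(n) := ∑_{i=1}^N α_i f_i(n), we have p-lim_n {g(n)} = ∑_{i=1}^N α_i C(f_i), where {x} := x − ⌊x + 1/2⌋ ∈ (−1/2, 1/2] is the signed fractional part. -/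
open Filter

open Topology

private lemma tendsto_ufadd {h ℓ : ℤ → AddCircle (1:ℝ)} {p q : Ultrafilter ℤ}
    {y : AddCircle (1:ℝ)}
    (hin : ∀ᶠ m in (p : Filter ℤ), Tendsto (fun n => h (n + m)) (q : Filter ℤ) (𝓝 (ℓ m)))
    (hout : Tendsto ℓ (p : Filter ℤ) (𝓝 y)) :
    Tendsto h (AP.UFAdd p q : Filter ℤ) (𝓝 y) := by
  rw [show (AP.UFAdd p q : Filter ℤ)
      = Filter.bind ↑p (fun m => Filter.map (fun n => n + m) ↑q) from rfl]
  rw [tendsto_nhds]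
  intro s hs hys
  have h2 : ∀ᶠ m in (p : Filter ℤ), ℓ m ∈ s := hout (hs.mem_nhds hys)
  rw [Filter.mem_bind']
  filter_upwards [hin, h2] with m hm hms
  exact hm (hs.mem_nhds hms)

private lemma key_circle (p : Ultrafilter ℤ) (hp : AP.IsIdem p) (α : ℝ) :
    ∀ (d : ℕ) (f : ℤ → ℤ) (c : ℤ), AP.APdegLE p d f → AP.HasC p d f c →
      Tendsto (fun n : ℤ => ((α * (f n : ℝ) : ℝ) : AddCircle (1:ℝ))) (p : Filter ℤ)
        (𝓝 ((α * (c : ℝ) : ℝ) : AddCircle (1:ℝ))) := by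
  intro d
  induction d with
  | zero =>
    intro f c _ hc
    have h1 : ∀ᶠ a in (p : Filter ℤ), f a = c := by
      have h0 : ∀ᶠ a in (p : Filter ℤ),
          AP.IterLim p 0 (fun v => AP.DeltaFull 0 f (Fin.cons a v)) (((-1:ℤ)^0) • c) := hc
      filter_upwards [h0] with a ha
      simpa [AP.IterLim, AP.DeltaFull] using ha
    refine Tendsto.congr' ?_ tendsto_const_nhds
    filter_upwards [h1] with a ha
    rw [ha]
  | succ d ih =>
    intro f c hf hc
    obtain ⟨x, hx⟩ : ∃ x, Tendsto (fun n : ℤ => ((α * (f n : ℝ) : ℝ) : AddCircle (1:ℝ)))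
        (p : Filter ℤ) (𝓝 x) := ⟨(p.map _).lim, (p.map _).le_nhds_lim⟩
    have hf' : ∀ᶠ a in (p : Filter ℤ), AP.APdegLE p d (AP.Dbar a f) := hf
    have hdbar : ∀ᶠ a in (p : Filter ℤ), AP.HasC p d (AP.Dbar a f) (-c) := by
      have h2 : ∀ᶠ a in (p : Filter ℤ),
          AP.IterLim p (d+1) (fun v => AP.DeltaFull (d+1) f (Fin.cons a v))
            (((-1:ℤ)^(d+1)) • c) := hc
      filter_upwards [h2] with a ha
      have e1 : (fun v : Fin (d+1) → ℤ => AP.DeltaFull (d+1) f (Fin.cons a v)) =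
          AP.DeltaFull d (AP.Dbar a f) := by
        funext v
        simp [AP.DeltaFull, Fin.cons_zero, Fin.cons_succ]
      rw [e1] at ha
      have e2 : ((-1:ℤ)^(d+1)) • c = ((-1:ℤ)^d) • (-c) := by
        simp only [smul_eq_mul, pow_succ]; ring
      rw [e2] at ha
      exact ha
    have hIH : ∀ᶠ m in (p : Filter ℤ),
        Tendsto (fun n : ℤ => ((α * ((AP.Dbar m f n : ℤ) : ℝ) : ℝ) : AddCircle (1:ℝ)))
          (p : Filter ℤ) (𝓝 ((α * (((-c : ℤ)) : ℝ) : ℝ) : AddCircle (1:ℝ))) := by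
      filter_upwards [hf', hdbar] with m h1 h2 using ih (AP.Dbar m f) (-c) h1 h2
    set k : AddCircle (1:ℝ) := ((α * (((-c : ℤ)) : ℝ) : ℝ) : AddCircle (1:ℝ)) with hk
    have hin : ∀ᶠ m in (p : Filter ℤ),
        Tendsto (fun n : ℤ => ((α * (f (n + m) : ℝ) : ℝ) : AddCircle (1:ℝ))) (p : Filter ℤ)
          (𝓝 ((k + x) + ((α * (f m : ℝ) : ℝ) : AddCircle (1:ℝ)))) := by
      filter_upwards [hIH] with m hm
      have h3 : Tendsto (fun n : ℤ =>
          (((α * ((AP.Dbar m f n : ℤ) : ℝ) : ℝ) : AddCircle (1:ℝ))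
            + ((α * (f n : ℝ) : ℝ) : AddCircle (1:ℝ)))
            + ((α * (f m : ℝ) : ℝ) : AddCircle (1:ℝ))) (p : Filter ℤ)
          (𝓝 ((k + x) + ((α * (f m : ℝ) : ℝ) : AddCircle (1:ℝ)))) :=
        (hm.add hx).add tendsto_const_nhds
      refine h3.congr fun n => ?_
      have eZ : ((AP.Dbar m f n : ℤ) : ℝ) = (f (n + m) : ℝ) - (f n : ℝ) - (f m : ℝ) := by
        show ((f (n + m) - f n - f m : ℤ) : ℝ) = _
        push_cast; ring
      rw [← AddCircle.coe_add, ← AddCircle.coe_add]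
      congr 1
      rw [eZ]; ring
    have hout : Tendsto (fun m : ℤ => (k + x) + ((α * (f m : ℝ) : ℝ) : AddCircle (1:ℝ)))
        (p : Filter ℤ) (𝓝 ((k + x) + x)) := tendsto_const_nhds.add hx
    have hb : Tendsto (fun n : ℤ => ((α * (f n : ℝ) : ℝ) : AddCircle (1:ℝ)))
        (AP.UFAdd p p : Filter ℤ) (𝓝 ((k + x) + x)) := tendsto_ufadd hin hout
    rw [hp] at hb
    have hxy : x = (k + x) + x := tendsto_nhds_unique hx hb
    have hk0 : k + x = 0 := by
      have h4 : (k + x) + x = 0 + x := by rw [zero_add]; exact hxy.symm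
      exact add_right_cancel h4
    have hxval : x = -k := eq_neg_of_add_eq_zero_right hk0
    have : ((α * (c : ℝ) : ℝ) : AddCircle (1:ℝ)) = x := by
      rw [hxval, hk, ← AddCircle.coe_neg]
      congr 1
      push_cast; ring
    rwa [this]

private lemma coe_sub_round (r : ℝ) :
    ((AddCircle.equivIco 1 (-(1/2) : ℝ) (r : AddCircle (1:ℝ)) : ℝ)) = r - round r := by
  have h1 : (AddCircle.equivIco 1 (-(1/2) : ℝ) (r : AddCircle (1:ℝ)) : ℝ)
      = toIcoMod (by norm_num : (0:ℝ) < 1) (-(1/2)) r := by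
    rw [show AddCircle.equivIco (1:ℝ) (-(1/2)) = QuotientAddGroup.equivIcoMod
        (by norm_num : (0:ℝ) < 1) (-(1/2)) from rfl, QuotientAddGroup.equivIcoMod_coe]
  rw [h1]
  rw [toIcoMod_eq_iff]
  constructor
  · constructor
    · have := Int.floor_le (r + 1/2)
      rw [round_eq]
      linarith
    · have := Int.lt_floor_add_one (r + 1/2)
      rw [round_eq]
      linarith
  · exact ⟨round r, by simp⟩

/-- if `|∑ αᵢ C(fᵢ)| < 1/2` and `g n = ∑ αᵢ fᵢ(n)`, then
`p-lim_n {g(n)} = ∑ αᵢ C(fᵢ)` where `{x} = x - round x` is the signed fractional part. -/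
theorem stmt_12 (p : Ultrafilter ℤ) (hp : AP.IsIdem p) (N : ℕ)
    (α : Fin N → ℝ) (f : Fin N → ℤ → ℤ) (d : Fin N → ℕ) (c : Fin N → ℤ)
    (hf : ∀ i, AP.APdegLE p (d i) (f i)) (hc : ∀ i, AP.HasC p (d i) (f i) (c i))
    (hsmall : |∑ i, α i * (c i : ℝ)| < 1 / 2) :
    Filter.Tendsto
      (fun n : ℤ => (∑ i, α i * (f i n : ℝ)) - (round (∑ i, α i * (f i n : ℝ)) : ℝ))
      (p : Filter ℤ) (nhds (∑ i, α i * (c i : ℝ))) := by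
  set s : ℝ := ∑ i, α i * (c i : ℝ) with hs
  have hcast : ∀ (g : Fin N → ℝ),
      ((∑ i, g i : ℝ) : AddCircle (1:ℝ)) = ∑ i, ((g i : ℝ) : AddCircle (1:ℝ)) :=
    fun g => map_sum (QuotientAddGroup.mk' _) g Finset.univ
  have hcirc : Tendsto (fun n : ℤ => ((∑ i, α i * (f i n : ℝ) : ℝ) : AddCircle (1:ℝ)))
      (p : Filter ℤ) (𝓝 ((s : ℝ) : AddCircle (1:ℝ))) := by
    have h1 : Tendsto (fun n : ℤ => ∑ i, ((α i * (f i n : ℝ) : ℝ) : AddCircle (1:ℝ)))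
        (p : Filter ℤ) (𝓝 (∑ i, ((α i * (c i : ℝ) : ℝ) : AddCircle (1:ℝ)))) :=
      tendsto_finset_sum _ fun i _ => key_circle p hp (α i) (d i) (f i) (c i) (hf i) (hc i)
    rw [hs, hcast]
    exact h1.congr fun n => (hcast _).symm
  have habs := abs_lt.mp hsmall
  have hsmem : s ∈ Set.Ico (-(1/2) : ℝ) (-(1/2) + 1) := by
    constructor <;> [linarith [habs.1]; linarith [habs.2]]
  have hne : ((s : ℝ) : AddCircle (1:ℝ)) ≠ ((-(1/2) : ℝ) : AddCircle (1:ℝ)) := by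
    intro h
    have := (AddCircle.coe_eq_coe_iff_of_mem_Ico hsmem
      (Set.left_mem_Ico.mpr (by norm_num))).mp h
    linarith [habs.1]
  have hcont : ContinuousAt
      (fun z : AddCircle (1:ℝ) => ((AddCircle.equivIco 1 (-(1/2) : ℝ) z : ℝ)))
      ((s : ℝ) : AddCircle (1:ℝ)) :=
    continuousAt_subtype_val.comp (AddCircle.continuousAt_equivIco 1 (-(1/2)) hne)
  have hfinal := hcont.tendsto.comp hcirc
  rw [coe_sub_round] at hfinal
  have hrs : round s = 0 := round_eq_zero_iff.mpr (by constructor <;> [linarith [habs.1]; linarith [habs.2]])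
  rw [hrs] at hfinal
  simp only [Int.cast_zero, sub_zero] at hfinal
  exact hfinal.congr fun n => coe_sub_round _
end

section
/- Let p be an idempotent ultrafilter on ℤ and α_0,…,α_N ∈ ℝ. Then f(n) := ⌊∑_{i=0}^N α_i n^i + 1/2⌋ (closest integer to the real polynomial value) is a p-almost polynomial, and it is admissible provided |α_0| < 1/2. -/
open Filter

open Filter Polynomial AP

namespace Work
variable {p : Ultrafilter ℤ}

lemma mem_ufadd {p q : Ultrafilter ℤ} {s : Set ℤ} :
    s ∈ (UFAdd p q : Filter ℤ) ↔ ∀ᶠ m in (p : Filter ℤ), ∀ᶠ n in (q : Filter ℤ), n + m ∈ s := by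
  simp [UFAdd, Ultrafilter.mem_coe]
  rfl

lemma idem_shift (hp : IsIdem p) {P : ℤ → Prop} (h : ∀ᶠ x in (p : Filter ℤ), P x) :
    ∀ᶠ a in (p : Filter ℤ), ∀ᶠ x in (p : Filter ℤ), P (x + a) := by
  have : {x | P x} ∈ (UFAdd p p : Filter ℤ) := by rw [hp]; exact h
  exact mem_ufadd.mp this

/-- the circle -/
local notation "𝕋" => AddCircle (1:ℝ)

lemma norm_coe_circle (x : ℝ) : ‖(x : 𝕋)‖ = |x - round x| := by
  rw [AddCircle.norm_eq]; simp

/-- key lemma: along an idempotent ultrafilter, the values of a real polynomial tend to its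
constant term mod 1 -/
lemma tendsto_circle (hp : IsIdem p) (d : ℕ) :
    ∀ g : ℝ[X], g.natDegree ≤ d →
      Tendsto (fun n : ℤ => ((g.eval (n:ℝ) - g.eval 0 : ℝ) : 𝕋)) (p : Filter ℤ) (nhds 0) := by
  induction d with
  | zero =>
    intro g hg
    rw [Polynomial.eq_C_of_natDegree_le_zero hg]
    simpa using tendsto_const_nhds
  | succ d ih =>
    intro g hg
    set φ : ℤ → 𝕋 := fun n : ℤ => ((g.eval (n:ℝ) - g.eval 0 : ℝ) : 𝕋) with hφ
    -- the limit exists by compactness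
    obtain ⟨c, hc⟩ : ∃ c : 𝕋, Tendsto φ (p : Filter ℤ) (nhds c) :=
      ⟨(p.map φ).lim, Ultrafilter.le_nhds_lim _⟩
    -- difference polynomials
    have hdiff : ∀ m : ℤ, ((taylor (m:ℝ) g - g).natDegree ≤ d) := by
      intro m
      rw [Polynomial.natDegree_le_iff_coeff_eq_zero]
      intro k hk
      rw [Polynomial.coeff_sub, taylor_coeff, sub_eq_zero]
      have hdk : (hasseDeriv k g).natDegree = 0 := by
        have := Polynomial.natDegree_hasseDeriv g k
        omega
      rcases le_or_gt k g.natDegree with h | h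
      · have hk' : k = g.natDegree := by omega
        rw [Polynomial.eq_C_of_natDegree_le_zero hdk.le, eval_C, hasseDeriv_coeff, zero_add,
          Nat.choose_self, Nat.cast_one, one_mul, hk']
      · rw [Polynomial.coeff_eq_zero_of_natDegree_lt h,
          Polynomial.eq_C_of_natDegree_le_zero hdk.le, eval_C, hasseDeriv_coeff, zero_add,
          Nat.choose_self, Nat.cast_one, one_mul, Polynomial.coeff_eq_zero_of_natDegree_lt h]
    -- φ (n + m) = φ n + φ m + ψ m n
    have hsplit : ∀ m n : ℤ, φ (n + m) = φ n + φ m +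
        (((taylor (m:ℝ) g - g).eval (n:ℝ) - (taylor (m:ℝ) g - g).eval 0 : ℝ) : 𝕋) := by
      intro m n
      rw [hφ]
      simp only [Polynomial.eval_sub, taylor_eval, zero_add]
      rw [← AddCircle.coe_add, ← AddCircle.coe_add]
      congr 1
      push_cast
      ring
    -- inner limits
    have hinner : ∀ m : ℤ, Tendsto (fun n : ℤ => φ (n + m)) (p : Filter ℤ) (nhds (c + φ m)) := by
      intro m
      have h1 := ih (taylor (m:ℝ) g - g) (hdiff m)
      have h2 : Tendsto (fun n : ℤ => φ n + φ m +
          (((taylor (m:ℝ) g - g).eval (n:ℝ) - (taylor (m:ℝ) g - g).eval 0 : ℝ) : 𝕋))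
          (p : Filter ℤ) (nhds (c + φ m + 0)) :=
        Tendsto.add (Tendsto.add hc tendsto_const_nhds) h1
      rw [add_zero] at h2
      exact h2.congr fun n => (hsplit m n).symm
    -- outer limit
    have houter : Tendsto (fun m : ℤ => c + φ m) (p : Filter ℤ) (nhds (c + c)) :=
      Tendsto.add tendsto_const_nhds hc
    -- combine: φ tends to c + c along UFAdd p p = p
    have hcc : Tendsto φ (p : Filter ℤ) (nhds (c + c)) := by
      rw [tendsto_nhds]
      intro U hU hcU
      obtain ⟨V, hVU, hVc, hVo⟩ : ∃ V, V ⊆ U ∧ IsClosed V ∧ V ∈ nhds (c + c) := by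
        rcases (closed_nhds_basis (c + c)).mem_iff.mp (hU.mem_nhds hcU) with ⟨V, ⟨hV1, hV2⟩, hV3⟩
        exact ⟨V, hV3, hV2, hV1⟩
      have hint : interior V ∈ nhds (c + c) := interior_mem_nhds.mpr hVo
      have hmem : ∀ᶠ m in (p : Filter ℤ), ∀ᶠ n in (p : Filter ℤ), φ (n + m) ∈ V := by
        filter_upwards [houter hint] with m hm
        have : V ∈ nhds (c + φ m) := mem_nhds_iff.mpr ⟨interior V, interior_subset, isOpen_interior, hm⟩
        exact hinner m this
      have : {n | φ n ∈ V} ∈ (UFAdd p p : Filter ℤ) := mem_ufadd.mpr hmem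
      rw [hp] at this
      filter_upwards [this] with n hn using hVU hn
    have := tendsto_nhds_unique hc hcc
    have hc0 : c = 0 := by
      have : c + c = c + 0 := by rw [add_zero]; exact this.symm
      exact (add_left_cancel this)
    rwa [hc0] at hc

/-- usable form with ε -/
lemma poly_close (hp : IsIdem p) {d : ℕ} (g : ℝ[X]) (hg : g.natDegree ≤ d) {ε : ℝ} (hε : 0 < ε) :
    ∀ᶠ n : ℤ in (p : Filter ℤ),
      |g.eval (n:ℝ) - g.eval 0 - round (g.eval (n:ℝ) - g.eval 0)| < ε := by
  have h := tendsto_circle hp d g hg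
  have := Metric.tendsto_nhds.mp h ε hε
  filter_upwards [this] with n hn
  rwa [dist_zero_right, norm_coe_circle] at hn

lemma round_eq_of_close {y : ℝ} {m : ℤ} (h : |y - m| < 1/2) : round y = m := by
  rw [round_eq, Int.floor_eq_iff]
  rw [abs_lt] at h
  constructor
  · push_cast; linarith
  · push_cast; linarith

/-- Dbar congruence under a.e. equality -/
lemma dbar_congr (hp : IsIdem p) {f f' : ℤ → ℤ} (h : ∀ᶠ x in (p : Filter ℤ), f x = f' x) :
    ∀ᶠ a in (p : Filter ℤ), ∀ᶠ x in (p : Filter ℤ), Dbar a f x = Dbar a f' x := by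
  filter_upwards [idem_shift hp h, h] with a ha hfa
  filter_upwards [ha, h] with x hxa hx
  simp only [Dbar, hxa, hfa, hx]

lemma apdeg_congr (hp : IsIdem p) : ∀ (d : ℕ) {f f' : ℤ → ℤ},
    (∀ᶠ x in (p : Filter ℤ), f x = f' x) → APdegLE p d f → APdegLE p d f' := by
  intro d
  induction d with
  | zero =>
    intro f f' h hf
    obtain ⟨c, hc⟩ := hf
    exact ⟨c, by filter_upwards [h, hc] with x h1 h2; rw [← h1, h2]⟩
  | succ d ih =>
    intro f f' h hf
    filter_upwards [dbar_congr hp h, hf] with a ha hfa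
    exact ih ha hfa

lemma apdeg_add_const : ∀ (d : ℕ) (f : ℤ → ℤ) (c : ℤ),
    APdegLE p d f → APdegLE p d (fun x => f x + c) := by
  intro d
  induction d with
  | zero =>
    intro f c hf
    obtain ⟨c', hc⟩ := hf
    exact ⟨c' + c, by filter_upwards [hc] with x hx; rw [hx]⟩
  | succ d ih =>
    intro f c hf
    have key : ∀ a : ℤ, Dbar a (fun x => f x + c) = fun x => Dbar a f x + (-c) := by
      intro a; funext x; simp only [Dbar]; ring
    filter_upwards [hf] with a ha
    rw [key a]
    exact ih _ _ ha

/-- unfolding of HasC-style iterated limits -/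
lemma iter_base (f : ℤ → ℤ) (c : ℤ) :
    IterLim p 1 (DeltaFull 0 f) c ↔ ∀ᶠ a in (p : Filter ℤ), f a = c := by
  simp only [IterLim, DeltaFull, Fin.cons_zero]

lemma iter_succ (d : ℕ) (f : ℤ → ℤ) (c : ℤ) :
    IterLim p (d + 2) (DeltaFull (d + 1) f) c ↔
      ∀ᶠ a in (p : Filter ℤ), IterLim p (d + 1) (DeltaFull d (Dbar a f)) c := by
  show (∀ᶠ a in (p : Filter ℤ), IterLim p (d+1) (fun v => DeltaFull (d+1) f (Fin.cons a v)) c) ↔ _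
  apply eventually_congr
  apply Eventually.of_forall
  intro a
  have : (fun v => DeltaFull (d+1) f (Fin.cons a v)) = DeltaFull d (Dbar a f) := by
    funext v
    simp [DeltaFull]
  rw [this]

lemma iterQ_congr (hp : IsIdem p) : ∀ (d : ℕ) {f f' : ℤ → ℤ} {c : ℤ},
    (∀ᶠ x in (p : Filter ℤ), f x = f' x) →
    IterLim p (d + 1) (DeltaFull d f) c → IterLim p (d + 1) (DeltaFull d f') c := by
  intro d
  induction d with
  | zero =>
    intro f f' c h hf
    rw [iter_base] at hf ⊢
    filter_upwards [h, hf] with x h1 h2; rw [← h1, h2]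
  | succ d ih =>
    intro f f' c h hf
    rw [iter_succ] at hf ⊢
    filter_upwards [dbar_congr hp h, hf] with a ha hfa
    exact ih ha hfa

lemma taylor_sub_deg {d : ℕ} {g : ℝ[X]} (hg : g.natDegree ≤ d + 1) (m : ℝ) :
    (taylor m g - g).natDegree ≤ d := by
  rw [Polynomial.natDegree_le_iff_coeff_eq_zero]
  intro k hk
  rw [Polynomial.coeff_sub, taylor_coeff, sub_eq_zero]
  have hdk : (hasseDeriv k g).natDegree = 0 := by
    have := Polynomial.natDegree_hasseDeriv g k
    omega
  rcases le_or_gt k g.natDegree with h | h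
  · have hk' : k = g.natDegree := by omega
    rw [Polynomial.eq_C_of_natDegree_le_zero hdk.le, eval_C, hasseDeriv_coeff, zero_add,
      Nat.choose_self, Nat.cast_one, one_mul, hk']
  · rw [Polynomial.coeff_eq_zero_of_natDegree_lt h,
      Polynomial.eq_C_of_natDegree_le_zero hdk.le, eval_C, hasseDeriv_coeff, zero_add,
      Nat.choose_self, Nat.cast_one, one_mul, Polynomial.coeff_eq_zero_of_natDegree_lt h]

/-- Main induction: round of a real polynomial with zero constant term is an almost polynomial
with zero `C`-constant. -/
lemma main (hp : IsIdem p) : ∀ (d : ℕ) (g : ℝ[X]), g.natDegree ≤ d → g.eval 0 = 0 →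
    APdegLE p d (fun n : ℤ => round (g.eval (n:ℝ))) ∧
    IterLim p (d + 1) (DeltaFull d (fun n : ℤ => round (g.eval (n:ℝ)))) 0 := by
  intro d
  induction d with
  | zero =>
    intro g hg h0
    have hc0 : g.coeff 0 = 0 := by rw [Polynomial.coeff_zero_eq_eval_zero, h0]
    have hgC : g = 0 := by
      rw [Polynomial.eq_C_of_natDegree_le_zero hg, hc0, map_zero]
    subst hgC
    constructor
    · exact ⟨0, Eventually.of_forall fun x => by simp⟩
    · rw [iter_base]
      exact Eventually.of_forall fun a => by simp
  | succ d ih =>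
    intro g hg h0
    set f : ℤ → ℤ := fun n : ℤ => round (g.eval (n:ℝ)) with hf
    set q : ℤ → ℝ[X] := fun a => taylor (a:ℝ) g - g - Polynomial.C (g.eval (a:ℝ)) with hq
    have hqdeg : ∀ a : ℤ, (q a).natDegree ≤ d := fun a =>
      le_trans (Polynomial.natDegree_sub_le _ _)
        (by simp only [Polynomial.natDegree_C, max_le_iff]; exact ⟨taylor_sub_deg hg _, Nat.zero_le _⟩)
    have hqeval : ∀ (a : ℤ) (x : ℝ), (q a).eval x = g.eval (x + (a:ℝ)) - g.eval x - g.eval (a:ℝ) := by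
      intro a x
      simp [hq, taylor_eval]
    have hq0 : ∀ a : ℤ, (q a).eval 0 = 0 := by
      intro a
      simp [hqeval, h0]
    -- the key claim
    have key : ∀ᶠ a in (p : Filter ℤ), ∀ᶠ x in (p : Filter ℤ),
        Dbar a f x = round ((q a).eval (x:ℝ)) := by
      have hε : (0:ℝ) < 1/9 := by norm_num
      filter_upwards [poly_close hp g hg hε] with a ha
      filter_upwards [poly_close hp g hg hε, poly_close hp (taylor (a:ℝ) g)
        (by simp only [natDegree_taylor]; exact hg) hε] with x hx hxa
      rw [h0, sub_zero] at ha hx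
      rw [taylor_eval, taylor_eval, zero_add] at hxa
      set A : ℤ := round (g.eval (a:ℝ))
      set Xt : ℤ := round (g.eval (x:ℝ))
      set B : ℤ := round (g.eval ((x:ℝ) + a) - g.eval (a:ℝ))
      have hxa' : |g.eval (((x + a : ℤ)):ℝ) - ((A + B : ℤ) : ℝ)| < 2/9 := by
        push_cast
        rw [abs_lt] at ha hxa ⊢
        constructor <;> linarith [ha.1, ha.2, hxa.1, hxa.2]
      have hfxa : f (x + a) = A + B := round_eq_of_close (hxa'.trans (by norm_num))
      have : |((Dbar a f x : ℤ) : ℝ) - (q a).eval (x:ℝ)| < 1/2 := by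
        rw [Dbar, hfxa, hqeval]
        have hfx : ((f x : ℤ) : ℝ) = (Xt : ℝ) := by norm_cast
        have hfa : ((f a : ℤ) : ℝ) = (A : ℝ) := by norm_cast
        push_cast [hfx, hfa]
        push_cast at hxa'
        rw [abs_lt] at hx ha hxa' ⊢
        constructor <;> linarith [hx.1, hx.2, ha.1, ha.2, hxa'.1, hxa'.2]
      have := round_eq_of_close (by rwa [abs_sub_comm] at this)
      rw [this]
    constructor
    · show ∀ᶠ a in (p : Filter ℤ), APdegLE p d (Dbar a f)
      filter_upwards [key] with a ha
      exact apdeg_congr hp d (ha.mono fun x hx => hx.symm) (ih (q a) (hqdeg a) (hq0 a)).1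
    · rw [iter_succ]
      filter_upwards [key] with a ha
      exact iterQ_congr hp d (ha.mono fun x hx => hx.symm) (ih (q a) (hqdeg a) (hq0 a)).2

lemma round_mem_pair (t : ℝ) {δ : ℝ} (h : |δ| < 1/4) :
    round (t + δ) = ⌊t + 1/4⌋ ∨ round (t + δ) = ⌊t + 3/4⌋ := by
  rw [abs_lt] at h
  have h1 : ⌊t + 1/4⌋ ≤ round (t + δ) := by
    rw [round_eq]; exact Int.floor_mono (by linarith)
  have h2 : round (t + δ) ≤ ⌊t + 3/4⌋ := by
    rw [round_eq]; exact Int.floor_mono (by linarith)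
  have h3 : ⌊t + 3/4⌋ ≤ ⌊t + 1/4⌋ + 1 := by
    have := Int.floor_mono (show t + 3/4 ≤ (t + 1/4) + 1 by linarith)
    rwa [Int.floor_add_one] at this
  omega

end Work

theorem aux_stmt_14 (p : Ultrafilter ℤ) (hp : AP.IsIdem p) (N : ℕ) (α : Fin (N + 1) → ℝ) :
    AP.APdegLE p N (fun n : ℤ => round (∑ i : Fin (N + 1), α i * (n : ℝ) ^ (i : ℕ))) ∧
    (|α 0| < 1 / 2 →
      AP.HasC p N (fun n : ℤ => round (∑ i : Fin (N + 1), α i * (n : ℝ) ^ (i : ℕ))) 0) := by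
  open Polynomial AP Work Filter in
  set t : ℝ := α 0 with htdef
  set g : ℝ[X] := ∑ i : Fin (N+1), Polynomial.C (α i) * Polynomial.X ^ (i:ℕ) with hgdef
  have hgeval : ∀ x : ℝ, g.eval x = ∑ i : Fin (N+1), α i * x ^ (i:ℕ) := by
    intro x; simp [hgdef, Polynomial.eval_finset_sum]
  have hgdeg : g.natDegree ≤ N :=
    Polynomial.natDegree_sum_le_of_forall_le _ _ fun i _ =>
      le_trans (Polynomial.natDegree_C_mul_le _ _) (by simp [Polynomial.natDegree_X_pow]; exact i.is_le)
  have hg0 : g.eval 0 = t := by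
    rw [hgeval, Fin.sum_univ_succ]
    simp [htdef]
  set g0 : ℝ[X] := g - Polynomial.C t with hg0def
  have hg0deg : g0.natDegree ≤ N :=
    le_trans (Polynomial.natDegree_sub_le _ _) (by simp [Polynomial.natDegree_C]; exact hgdeg)
  have hg00 : g0.eval 0 = 0 := by simp [hg0def, hg0]
  have hg0eval : ∀ x : ℝ, g0.eval x = g.eval x - t := by intro x; simp [hg0def]
  obtain ⟨hap, hiter⟩ := Work.main hp N g0 hg0deg hg00
  set ft : ℤ → ℤ := fun n : ℤ => round (g0.eval (n:ℝ)) with hftdef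
  set f : ℤ → ℤ := fun n : ℤ => round (g.eval (n:ℝ)) with hfdef
  have hfun : (fun n : ℤ => round (∑ i : Fin (N+1), α i * ((n:ℤ):ℝ) ^ (i:ℕ))) = f := by
    funext n
    show _ = round (g.eval ((n:ℤ):ℝ))
    rw [hgeval]
  have hδ : ∀ ε : ℝ, 0 < ε → ∀ᶠ n : ℤ in (p : Filter ℤ),
      |g0.eval (n:ℝ) - (ft n : ℝ)| < ε := by
    intro ε hε
    filter_upwards [Work.poly_close hp g0 hg0deg hε] with n hn
    rwa [hg00, sub_zero] at hn
  have hkey : ∀ n : ℤ, f n = ft n + round (t + (g0.eval (n:ℝ) - (ft n : ℝ))) := by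
    intro n
    have : g.eval (n:ℝ) = ((ft n : ℤ) : ℝ) + (t + (g0.eval (n:ℝ) - (ft n : ℝ))) := by
      rw [hg0eval]; ring
    rw [hfdef]
    show round (g.eval (n:ℝ)) = _
    rw [this, round_intCast_add]
  rw [hfun]
  constructor
  · -- find the a.e. constant value of the round correction
    obtain ⟨c₀, hc₀⟩ : ∃ c₀ : ℤ, ∀ᶠ n : ℤ in (p : Filter ℤ),
        round (t + (g0.eval (n:ℝ) - (ft n : ℝ))) = c₀ := by
      by_cases hcase : ∀ᶠ n : ℤ in (p : Filter ℤ),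
          round (t + (g0.eval (n:ℝ) - (ft n : ℝ))) = ⌊t + 1/4⌋
      · exact ⟨_, hcase⟩
      · refine ⟨⌊t + 3/4⌋, ?_⟩
        have hnot : ∀ᶠ n : ℤ in (p : Filter ℤ),
            ¬ round (t + (g0.eval (n:ℝ) - (ft n : ℝ))) = ⌊t + 1/4⌋ :=
          (Ultrafilter.eventually_not).mpr hcase
        filter_upwards [hnot, hδ (1/4) (by norm_num)] with n h1 h2
        rcases Work.round_mem_pair t h2 with h | h
        · exact absurd h h1
        · exact h
    have h1 : ∀ᶠ n : ℤ in (p : Filter ℤ), (fun m => ft m + c₀) n = f n := by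
      filter_upwards [hc₀] with n hn
      rw [hkey n, hn]
    exact Work.apdeg_congr hp N h1 (Work.apdeg_add_const N ft c₀ hap)
  · intro ht
    have hε : (0:ℝ) < 1/2 - |t| := by rw [htdef]; linarith
    have hfeq : ∀ᶠ n : ℤ in (p : Filter ℤ), ft n = f n := by
      filter_upwards [hδ _ hε] with n hn
      rw [hkey n]
      have : round (t + (g0.eval (n:ℝ) - (ft n : ℝ))) = (0:ℤ) := by
        apply Work.round_eq_of_close
        rw [Int.cast_zero, sub_zero]
        have h1 := abs_lt.mp hn
        rw [abs_lt]
        constructor <;> linarith [h1.1, h1.2, le_abs_self t, neg_abs_le t]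
      rw [this, add_zero]
    show AP.IterLim p (N + 1) (AP.DeltaFull N f) (((-1:ℤ)^N) • (0:ℤ))
    rw [smul_zero]
    exact Work.iterQ_congr hp N hfeq hiter


/-- `n ↦ ⌊∑_{i=0}^N αᵢ nⁱ⌉` (closest integer to a real polynomial) is a
`p`-almost polynomial for every idempotent `p`, admissible provided `|α₀| < 1/2`. -/
theorem stmt_14 (p : Ultrafilter ℤ) (hp : AP.IsIdem p) (N : ℕ) (α : Fin (N + 1) → ℝ) :
    AP.APdegLE p N (fun n : ℤ => round (∑ i : Fin (N + 1), α i * (n : ℝ) ^ (i : ℕ))) ∧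
    (|α 0| < 1 / 2 →
      AP.HasC p N (fun n : ℤ => round (∑ i : Fin (N + 1), α i * (n : ℝ) ^ (i : ℕ))) 0) := by
  exact aux_stmt_14 p hp N α
end

section
/- Let f : ℕ → ℝ satisfy lim_{n→∞} f(n) = ∞ and lim_{n→∞} (f(n+1) − f(n)) = 0. Then there exists an idempotent ultrafilter p on ℕ such that for every γ ∈ 𝕋 there exists α ∈ 𝕋 with p-lim_n α·⌊f(n)+1/2⌋ = γ in 𝕋. -/
open Filter

attribute [local instance] Ultrafilter.add

namespace Stmt16Aux

lemma round_eq_of_abs_lt {x : ℝ} {k : ℤ} (h : |x - k| < 1/2) : round x = k := by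
  rw [round_eq, Int.floor_eq_iff]
  rw [abs_lt] at h
  constructor <;> linarith

lemma telescope (f : ℕ → ℝ) (s : ℝ) (N : ℕ)
    (h : ∀ t, N ≤ t → |f (t+1) - f t| ≤ s) :
    ∀ n, N ≤ n → ∀ j, |f (n + j) - f n| ≤ j * s := by
  intro n hn j
  induction j with
  | zero => simp
  | succ j ih =>
    have h1 := h (n + j) (by omega)
    have h2 : n + (j+1) = (n + j) + 1 := by omega
    rw [h2]
    have h3 := abs_add_le (f ((n+j)+1) - f (n+j)) (f (n+j) - f n)
    have h4 : f ((n+j)+1) - f (n+j) + (f (n+j) - f n) = f ((n+j)+1) - f n := by ring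
    rw [h4] at h3
    push_cast
    nlinarith [abs_nonneg (f ((n+j)+1) - f (n+j))]

lemma exists_good (f : ℕ → ℝ) (h1 : Tendsto f atTop atTop)
    (h2 : Tendsto (fun n => f (n + 1) - f n) atTop (nhds 0))
    (L N : ℕ) (C : ℝ) :
    ∃ n, N ≤ n ∧ C ≤ (round (f n) : ℝ) ∧ ∀ t ≤ L, round (f (n + t)) = round (f n) := by
  classical
  set ε : ℝ := 1/(8*(L+1)) with hεdef
  have hε : 0 < ε := by positivity
  obtain ⟨N1, hN1⟩ : ∃ N1, ∀ t, N1 ≤ t → |f (t+1) - f t| ≤ ε := by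
    have := Metric.tendsto_atTop.mp h2 ε hε
    obtain ⟨N1, hN1⟩ := this
    exact ⟨N1, fun t ht => by simpa [Real.dist_eq] using (hN1 t ht).le⟩
  set N2 := max N N1 with hN2def
  set k : ℤ := max ⌈C⌉ ⌈f N2⌉ + 1 with hkdef
  have hkC : C ≤ (k:ℝ) := by
    have h6 : (⌈C⌉:ℤ) ≤ k := by rw [hkdef]; omega
    have h7 : ((⌈C⌉:ℤ):ℝ) ≤ (k:ℝ) := by exact_mod_cast h6
    linarith [Int.le_ceil C]
  have hkf : f N2 < (k:ℝ) := by
    have h6 : (⌈f N2⌉:ℤ) < k := by rw [hkdef]; omega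
    have h7 : ((⌈f N2⌉:ℤ):ℝ) < (k:ℝ) := by exact_mod_cast h6
    linarith [Int.le_ceil (f N2)]
  have hex : ∃ j : ℕ, (k:ℝ) ≤ f (N2 + j) := by
    obtain ⟨M, hM⟩ := (tendsto_atTop.mp h1 (k:ℝ)).exists_forall_of_atTop
    exact ⟨M, hM (N2 + M) (by omega)⟩
  set j0 := Nat.find hex with hj0def
  have hj0 : (k:ℝ) ≤ f (N2 + j0) := Nat.find_spec hex
  have hj0pos : j0 ≠ 0 := by
    intro h0
    rw [h0] at hj0
    simp only [Nat.add_zero] at hj0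
    linarith
  set n := N2 + j0 with hndef
  have hprev : ¬ (k:ℝ) ≤ f (N2 + (j0 - 1)) := Nat.find_min hex (by omega)
  have hstep : |f ((N2 + (j0-1)) + 1) - f (N2 + (j0-1))| ≤ ε := hN1 _ (by omega)
  have hidx : (N2 + (j0-1)) + 1 = n := by omega
  rw [hidx] at hstep
  have hfn_up : f n ≤ (k:ℝ) + ε := by
    have := abs_le.mp hstep
    push_neg at hprev
    linarith [this.1, this.2]
  have hε8 : ε ≤ 1/8 := by
    rw [hεdef]
    rw [div_le_div_iff₀ (by positivity) (by norm_num)]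
    have : (0:ℝ) ≤ (L:ℝ) := Nat.cast_nonneg L
    linarith
  have hLε : (L:ℝ) * ε ≤ 1/8 := by
    rw [hεdef, mul_one_div, div_le_div_iff₀ (by positivity) (by norm_num)]
    have : (0:ℝ) ≤ (L:ℝ) := Nat.cast_nonneg L
    linarith
  have hvar : ∀ t, t ≤ L → |f (n + t) - f n| ≤ (L:ℝ) * ε := by
    intro t ht
    have := telescope f ε N1 hN1 n (by omega) t
    have h9 : (t:ℝ) * ε ≤ (L:ℝ) * ε := by
      have : (t:ℝ) ≤ (L:ℝ) := by exact_mod_cast ht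
      nlinarith
    linarith
  have hround : ∀ t, t ≤ L → round (f (n + t)) = k := by
    intro t ht
    apply round_eq_of_abs_lt
    have h10 := hvar t ht
    have h11 : |f n - (k:ℝ)| ≤ ε := by
      rw [abs_le]; constructor <;> linarith
    have := abs_add_le (f (n + t) - f n) (f n - (k:ℝ))
    have h12 : f (n + t) - f n + (f n - (k:ℝ)) = f (n+t) - (k:ℝ) := by ring
    rw [h12] at this
    linarith
  have hrn : round (f n) = k := by
    have := hround 0 (Nat.zero_le L)
    simpa using this
  refine ⟨n, by omega, ?_, ?_⟩
  · rw [hrn]; exact hkC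
  · intro t ht; rw [hround t ht, hrn]


lemma fs_rep (a : ℕ → ℕ) :
    ∀ (b : Stream' ℕ) (n : ℕ), n ∈ Hindman.FS b → ∀ k : ℕ, b = Stream'.drop k a →
      ∃ s : Finset ℕ, s.Nonempty ∧ (∀ i ∈ s, k ≤ i) ∧ n = ∑ i ∈ s, a i := by
  intro b n hn
  induction hn with
  | head' b =>
    intro k hk
    refine ⟨{k}, Finset.singleton_nonempty k, by simp, ?_⟩
    rw [hk]
    rw [Stream'.head_drop (a := (a : Stream' ℕ))]
    rfl
  | tail' b m hm ih =>
    intro k hk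
    have hbt : b.tail = Stream'.drop (k+1) a := by
      rw [hk, Stream'.tail_eq_drop, Stream'.drop_drop (s := (a : Stream' ℕ)), Nat.add_comm]
    obtain ⟨s, hne, hge, hsum⟩ := ih (k+1) hbt
    exact ⟨s, hne, fun i hi => by have := hge i hi; omega, hsum⟩
  | cons' b m hm ih =>
    intro k hk
    have hbt : b.tail = Stream'.drop (k+1) a := by
      rw [hk, Stream'.tail_eq_drop, Stream'.drop_drop (s := (a : Stream' ℕ)), Nat.add_comm]
    obtain ⟨s, hne, hge, hsum⟩ := ih (k+1) hbt
    have hknots : k ∉ s := fun hks => by have := hge k hks; omega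
    refine ⟨insert k s, Finset.insert_nonempty k s, ?_, ?_⟩
    · intro i hi
      rcases Finset.mem_insert.mp hi with rfl | hi'
      · exact le_refl _
      · have := hge i hi'; omega
    · rw [Finset.sum_insert hknots, ← hsum, hk, Stream'.head_drop (a := (a : Stream' ℕ))]
      rfl


lemma coe_int_zero (z : ℤ) : ((z:ℝ) : AddCircle (1:ℝ)) = 0 := by
  rw [AddCircle.coe_eq_zero_iff]; exact ⟨z, by simp⟩

lemma exists_alpha (m : ℕ → ℤ) (hm1 : ∀ i, 1 ≤ m i)
    (hmS : ∀ i, 2*(i+2)*(m i) + 1 ≤ m (i+1)) (γ0 : ℝ) :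
    ∃ α0 : ℝ, ∀ j, dist ((m j) • ((α0 : ℝ) : AddCircle (1:ℝ))) (γ0 : AddCircle (1:ℝ))
      ≤ 1/((j:ℝ)+2) := by
  have hmpos : ∀ k, (0:ℝ) < (m k : ℝ) := fun k => by
    have := hm1 k; exact_mod_cast lt_of_lt_of_le zero_lt_one (by exact_mod_cast this)
  have hm2 : ∀ i, 2 * m i ≤ m (i+1) := by
    intro i
    have h := hmS i
    have h1 := hm1 i
    nlinarith [Int.natCast_nonneg i]
  -- construct the nested sequence
  obtain ⟨x, hx0, hxS⟩ : ∃ x : ℕ → ℝ, x 0 = γ0 / (m 0) ∧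
      ∀ k, x (k+1) = (γ0 + ⌈(m (k+1) : ℝ) * x k - γ0⌉) / (m (k+1)) :=
    ⟨fun k => Nat.rec (γ0 / (m 0)) (fun k xk => (γ0 + ⌈(m (k+1) : ℝ) * xk - γ0⌉) / (m (k+1))) k,
      rfl, fun k => rfl⟩
  have hint : ∀ k, ∃ z : ℤ, (m k:ℝ) * x k - γ0 = z := by
    intro k
    cases k with
    | zero =>
      refine ⟨0, ?_⟩
      rw [hx0, mul_div_cancel₀ _ (ne_of_gt (hmpos 0))]
      simp
    | succ k =>
      refine ⟨⌈(m (k+1) : ℝ) * x k - γ0⌉, ?_⟩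
      rw [hxS, mul_div_cancel₀ _ (ne_of_gt (hmpos (k+1)))]
      ring
  have hstep : ∀ k, x k ≤ x (k+1) ∧ x (k+1) ≤ x k + 1/(m (k+1)) := by
    intro k
    set c : ℝ := (m (k+1) : ℝ) * x k - γ0 with hcdef
    have hxk : x k = (γ0 + c) / (m (k+1)) := by
      rw [hcdef]
      field_simp
      rw [eq_div_iff (ne_of_gt (hmpos (k+1)))]; ring
    have hx1 : x (k+1) = (γ0 + ⌈c⌉) / (m (k+1)) := hxS k
    have h2 : c ≤ (⌈c⌉:ℝ) := Int.le_ceil c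
    have h3 : (⌈c⌉:ℝ) < c + 1 := Int.ceil_lt_add_one c
    constructor
    · rw [hxk, hx1, div_le_div_iff₀ (hmpos (k+1)) (hmpos (k+1))]
      nlinarith [hmpos (k+1)]
    · rw [hxk, hx1, ← add_div, div_le_div_iff₀ (hmpos (k+1)) (hmpos (k+1))]
      nlinarith [hmpos (k+1)]
  have hmono : Monotone x := monotone_nat_of_le_succ (fun k => (hstep k).1)
  have hkey : ∀ k j, x (k+j) ≤ x k + 2/(m (k+1)) - 2/(m (k+j+1)) := by
    intro k j
    induction j with
    | zero => simp
    | succ j ih =>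
      have h1 := (hstep (k+j)).2
      have h2 : 2/((m (k+j+2)):ℝ) ≤ 1/((m (k+j+1)):ℝ) := by
        rw [div_le_div_iff₀ (hmpos (k+j+2)) (hmpos (k+j+1))]
        have := hm2 (k+j+1)
        have hc : (2:ℝ) * (m (k+j+1):ℝ) ≤ (m (k+j+2):ℝ) := by exact_mod_cast this
        linarith
      have he : k + (j+1) = (k+j)+1 := rfl
      rw [he]
      have he3 : k + j + 1 + 1 = k + j + 2 := by omega
      rw [he3]
      have hAB : (2:ℝ)/(m (k+j+1)) = 2*(1/(m (k+j+1))) := by ring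
      linarith
  have hbdd : BddAbove (Set.range x) := by
    refine ⟨x 0 + 2/(m 1), ?_⟩
    rintro _ ⟨j, rfl⟩
    have := hkey 0 j
    simp only [Nat.zero_add] at this
    have hpos := hmpos (j+1)
    have : x j ≤ x 0 + 2/(m 1) - 2/(m (j+1)) := by
      convert this using 3
    nlinarith [div_pos (by norm_num : (0:ℝ) < 2) hpos]
  set α0 := ⨆ j, x j with hα0def
  have hle_sup : ∀ k, x k ≤ α0 := fun k => le_ciSup hbdd k
  have hsup_le : ∀ k, α0 ≤ x k + 2/(m (k+1)) := by
    intro k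
    apply ciSup_le
    intro j
    rcases le_or_gt j k with hjk | hjk
    · have := hmono hjk
      have hpos := div_pos (by norm_num : (0:ℝ) < 2) (hmpos (k+1))
      linarith
    · have he : j = k + (j - k) := by omega
      have h2 := hkey k (j - k)
      rw [← he] at h2
      have hpos := div_pos (by norm_num : (0:ℝ) < 2) (hmpos (j+1))
      linarith
  refine ⟨α0, ?_⟩
  intro j
  obtain ⟨z, hz⟩ := hint j
  set θ : ℝ := (m j:ℝ) * (α0 - x j) with hθdef
  have hθ0 : 0 ≤ θ := mul_nonneg (hmpos j).le (by linarith [hle_sup j])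
  have hθ1 : θ ≤ 1/((j:ℝ)+2) := by
    have h1 : α0 - x j ≤ 2/(m (j+1)) := by linarith [hsup_le j]
    have h2 : θ ≤ (m j:ℝ) * (2/(m (j+1))) := by
      rw [hθdef]
      exact mul_le_mul_of_nonneg_left h1 (hmpos j).le
    have h3 : (m j:ℝ) * (2/(m (j+1))) ≤ 1/((j:ℝ)+2) := by
      rw [mul_div_assoc']
      rw [div_le_div_iff₀ (hmpos (j+1)) (by positivity)]
      have h5int : 2*((j:ℤ)+2)*(m j) ≤ m (j+1) := by linarith [hmS j]
      have h5 : ((2*((j:ℤ)+2)*(m j) : ℤ):ℝ) ≤ ((m (j+1) : ℤ):ℝ) := by exact_mod_cast h5int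
      push_cast at h5
      nlinarith [hmpos j]
    linarith
  have hcoe : ((m j) • ((α0:ℝ) : AddCircle (1:ℝ))) - (γ0 : AddCircle (1:ℝ))
      = ((θ:ℝ) : AddCircle (1:ℝ)) := by
    rw [← QuotientAddGroup.mk_zsmul]
    have h4 : ((m j) • α0 : ℝ) = (m j:ℝ) * α0 := zsmul_eq_mul α0 (m j)
    rw [h4, ← AddCircle.coe_sub]
    have h5 : (m j:ℝ) * α0 - γ0 = θ + z := by
      rw [hθdef, ← hz]; ring
    rw [h5, AddCircle.coe_add, coe_int_zero, add_zero]
  rw [dist_eq_norm, hcoe]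
  have hnorm : ‖((θ:ℝ) : AddCircle (1:ℝ))‖ = |θ - round θ| := UnitAddCircle.norm_eq
  rw [hnorm]
  have := round_le θ 0
  simp only [Int.cast_zero, sub_zero] at this
  rw [abs_of_nonneg hθ0] at this
  linarith


theorem main (f : ℕ → ℝ)
    (h1 : Filter.Tendsto f Filter.atTop Filter.atTop)
    (h2 : Filter.Tendsto (fun n => f (n + 1) - f n) Filter.atTop (nhds 0))
    (exists_good : ∀ (L N : ℕ) (C : ℝ),
      ∃ n, N ≤ n ∧ C ≤ (round (f n) : ℝ) ∧ ∀ t ≤ L, round (f (n + t)) = round (f n))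
    (fs_rep : ∀ (a : ℕ → ℕ) (b : Stream' ℕ) (n : ℕ), n ∈ Hindman.FS b →
      ∀ k : ℕ, b = Stream'.drop k a →
      ∃ s : Finset ℕ, s.Nonempty ∧ (∀ i ∈ s, k ≤ i) ∧ n = ∑ i ∈ s, a i)
    (exists_alpha : ∀ (m : ℕ → ℤ), (∀ i, 1 ≤ m i) →
      (∀ i, 2*(i+2)*(m i) + 1 ≤ m (i+1)) → ∀ (γ0 : ℝ),
      ∃ α0 : ℝ, ∀ j, dist ((m j) • ((α0 : ℝ) : AddCircle (1:ℝ))) (γ0 : AddCircle (1:ℝ))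
        ≤ 1/((j:ℝ)+2)) :
    ∃ p : Ultrafilter ℕ, AP.IsIdem p ∧
      ∀ γ : AddCircle (1 : ℝ), ∃ α : AddCircle (1 : ℝ),
        Filter.Tendsto (fun n : ℕ => round (f n) • α) (p : Filter ℕ) (nhds γ) := by
  classical
  choose g hgN hgC hgW using exists_good
  -- construct the sequence
  obtain ⟨e, he0, heS⟩ : ∃ e : ℕ → ℕ × ℕ, e 0 = (g 0 1 1, g 0 1 1) ∧
      ∀ i, e (i+1) = (g (e i).2 ((e i).2 + 1) (((2*(i+2)*(round (f (e i).1)) + 1 : ℤ)):ℝ),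
        (e i).2 + g (e i).2 ((e i).2 + 1) (((2*(i+2)*(round (f (e i).1)) + 1 : ℤ)):ℝ)) :=
    ⟨fun i => Nat.rec (g 0 1 1, g 0 1 1)
      (fun i p => (g p.2 (p.2 + 1) (((2*(i+2)*(round (f p.1)) + 1 : ℤ)):ℝ),
        p.2 + g p.2 (p.2 + 1) (((2*(i+2)*(round (f p.1)) + 1 : ℤ)):ℝ))) i,
      rfl, fun i => rfl⟩
  set a : ℕ → ℕ := fun i => (e i).1 with hadef
  set S : ℕ → ℕ := fun i => (e i).2 with hSdef
  set m : ℕ → ℤ := fun i => round (f (a i)) with hmdef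
  have ha0 : a 0 = g 0 1 1 := congrArg Prod.fst he0
  have hS0 : S 0 = a 0 := (congrArg Prod.snd he0).trans (congrArg Prod.fst he0).symm
  have haS : ∀ i, a (i+1) = g (S i) (S i + 1) (((2*(i+2)*(m i) + 1 : ℤ)):ℝ) :=
    fun i => congrArg Prod.fst (heS i)
  have hSS : ∀ i, S (i+1) = S i + a (i+1) := fun i => by
    rw [haS i]; exact congrArg Prod.snd (heS i)
  -- basic facts
  have ha0ge : 1 ≤ a 0 := by rw [ha0]; exact (hgN 0 1 1)
  have hm0 : 1 ≤ m 0 := by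
    have := hgC 0 1 1
    rw [← ha0] at this
    exact_mod_cast this
  have haN : ∀ i, S i + 1 ≤ a (i+1) := by intro i; rw [haS]; exact hgN _ _ _
  have hmS : ∀ i, 2*(i+2)*(m i) + 1 ≤ m (i+1) := by
    intro i
    have := hgC (S i) (S i + 1) (((2*(i+2)*(m i) + 1 : ℤ)):ℝ)
    rw [← haS] at this
    exact_mod_cast this
  have hwin : ∀ i, ∀ t ≤ S i, round (f (a (i+1) + t)) = m (i+1) := by
    intro i t ht
    have := hgW (S i) (S i + 1) (((2*(i+2)*(m i) + 1 : ℤ)):ℝ) t ht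
    rw [← haS] at this
    exact this
  have hm1 : ∀ i, 1 ≤ m i := by
    intro i
    induction i with
    | zero => exact hm0
    | succ i ih =>
      have h := hmS i
      nlinarith [Int.natCast_nonneg i]
  have hSa : ∀ i, a i ≤ S i := by
    intro i
    cases i with
    | zero => omega
    | succ i => rw [hSS]; omega
  have hamono : StrictMono a := by
    apply strictMono_nat_of_lt_succ
    intro i
    have := haN i
    have := hSa i
    omega
  have ha1 : ∀ i, 1 ≤ a i := by
    intro i
    cases i with
    | zero => exact ha0ge
    | succ i => have := haN i; omega
  have hSlt : ∀ j, S j < 2 * a j := by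
    intro j
    cases j with
    | zero => rw [hS0]; omega
    | succ j =>
      have h := haN j
      rw [hSS]
      omega
  have hSsum : ∀ j, S j = ∑ i ∈ Finset.range (j+1), a i := by
    intro j
    induction j with
    | zero => rw [hS0, Finset.sum_range_one]
    | succ j ih => rw [hSS, Finset.sum_range_succ, ih]
  -- FS bound
  have hFSbound : ∀ n ∈ Hindman.FS (a : Stream' ℕ), ∃ j, round (f n) = m j ∧ n ≤ S j ∧ a j ≤ n := by
    intro n hn
    obtain ⟨s, hne, -, rfl⟩ := fs_rep a (a : Stream' ℕ) n hn 0 Stream'.drop_zero.symm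
    set j := s.max' hne with hjdef
    have hj_mem : j ∈ s := s.max'_mem hne
    have hle : ∀ i ∈ s, i ≤ j := fun i hi => s.le_max' i hi
    have h_lower : a j ≤ ∑ i ∈ s, a i :=
      Finset.single_le_sum (f := a) (fun i _ => Nat.zero_le _) hj_mem
    have h_upper : ∑ i ∈ s, a i ≤ S j := by
      rw [hSsum]
      apply Finset.sum_le_sum_of_subset
      intro i hi
      exact Finset.mem_range.mpr (by have := hle i hi; omega)
    refine ⟨j, ?_, h_upper, h_lower⟩
    rcases Nat.eq_zero_or_eq_succ_pred j with hj0 | hjs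
    · have hs0 : s = {0} := by
        apply Finset.eq_singleton_iff_unique_mem.mpr
        exact ⟨hj0 ▸ hj_mem, fun i hi => by have := hle i hi; omega⟩
      rw [hs0, Finset.sum_singleton, hj0]
    · set i := j - 1 with hidef
      have hji : j = i + 1 := hjs
      have ht : (∑ i ∈ s, a i) = a (i+1) + ((∑ i ∈ s, a i) - a (i+1)) := by
        rw [← hji]; omega
      have htS : (∑ i ∈ s, a i) - a (i+1) ≤ S i := by
        have := hSS i
        rw [← hji] at *
        omega
      rw [hji, ht]
      exact hwin i _ htS
  -- get the ultrafilter
  obtain ⟨U, hUadd, hUFS⟩ := Hindman.exists_idempotent_ultrafilter_le_FS (a : Stream' ℕ)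
  have heqadd : (U.bind fun m => U.map fun n => n + m) = U + U := by
    refine Ultrafilter.coe_inj.mp (Filter.ext fun A => ?_)
    have hh1 : A ∈ (↑(U.bind fun m => U.map fun n => n + m) : Filter ℕ) ↔
        ∀ᶠ m in U, ∀ᶠ n in U, n + m ∈ A := Iff.rfl
    have hh2 : A ∈ (↑(U + U) : Filter ℕ) ↔ ∀ᶠ m in U, ∀ᶠ n in U, m + n ∈ A :=
      Ultrafilter.eventually_add U U (· ∈ A)
    rw [hh1, hh2]
    simp only [add_comm]
  have hIdem : AP.IsIdem U := by
    show AP.UFAdd U U = U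
    rw [AP.UFAdd, heqadd, hUadd]
  -- U contains no finite sets
  have hnotfin : ∀ T : Set ℕ, T.Finite → T ∉ U := by
    intro T hTfin hTU
    obtain ⟨x, _, hpure⟩ := Ultrafilter.eq_pure_of_finite_mem hTfin hTU
    have hxx : x + x = x := by
      have hx2 : ({x + x} : Set ℕ) ∈ U + U := by
        rw [hpure]
        exact (Ultrafilter.eventually_add _ _ (· ∈ ({x+x} : Set ℕ))).mpr (by simp)
      rw [hUadd, hpure] at hx2
      simpa using hx2
    have hx0 : x = 0 := by omega
    have hxFS : x ∈ Hindman.FS (a : Stream' ℕ) := by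
      have := hUFS
      rw [hpure] at this
      simpa using this
    obtain ⟨j, -, -, hja⟩ := hFSbound x hxFS
    have := ha1 j
    omega
  -- the limit statement
  refine ⟨U, hIdem, ?_⟩
  intro γ
  induction γ using QuotientAddGroup.induction_on with
  | H γ0 =>
  obtain ⟨α0, hα0⟩ := exists_alpha m hm1 hmS γ0
  refine ⟨(α0 : AddCircle (1:ℝ)), ?_⟩
  rw [Metric.tendsto_nhds]
  intro ε hε
  obtain ⟨K, hK⟩ := exists_nat_gt (1/ε)
  have hKε : 1/((K:ℝ)+2) < ε := by
    rw [div_lt_iff₀ (by positivity)]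
    rw [div_lt_iff₀ hε] at hK
    nlinarith
  have hAK : {n : ℕ | 2 * a K < n} ∈ U := by
    by_contra hcon
    have hcompl : ({n : ℕ | 2 * a K < n} : Set ℕ)ᶜ ∈ U :=
      (Ultrafilter.compl_mem_iff_notMem).mpr hcon
    have hfin : ({n : ℕ | 2 * a K < n} : Set ℕ)ᶜ.Finite := by
      apply Set.Finite.subset (Set.finite_Iic (2 * a K))
      intro n hn
      simp only [Set.mem_compl_iff, Set.mem_setOf_eq, not_lt] at hn
      exact hn
    exact hnotfin _ hfin hcompl
  filter_upwards [hUFS, hAK] with n hnFS hnK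
  obtain ⟨j, hjr, hjS, hja⟩ := hFSbound n hnFS
  have hjK : K < j := by
    have hh1 : n < 2 * a j := lt_of_le_of_lt hjS (hSlt j)
    have hh2 : a K < a j := by
      have : 2 * a K < n := hnK
      omega
    exact hamono.lt_iff_lt.mp hh2
  rw [hjr]
  calc dist ((m j) • ((α0:ℝ) : AddCircle (1:ℝ))) ((γ0:ℝ) : AddCircle (1:ℝ))
      ≤ 1/((j:ℝ)+2) := hα0 j
    _ ≤ 1/((K:ℝ)+2) := by
        apply one_div_le_one_div_of_le (by positivity)
        have : (K:ℝ) ≤ (j:ℝ) := by exact_mod_cast hjK.le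
        linarith
    _ < ε := hKε


end Stmt16Aux

/-- if `f : ℕ → ℝ` tends to infinity with differences tending to `0`, then there
is an idempotent ultrafilter `p` such that for every `γ ∈ 𝕋` there is `α ∈ 𝕋` with
`p-lim_n α·⌊f(n)⌉ = γ`. -/
theorem stmt_16 (f : ℕ → ℝ)
    (h1 : Filter.Tendsto f Filter.atTop Filter.atTop)
    (h2 : Filter.Tendsto (fun n => f (n + 1) - f n) Filter.atTop (nhds 0)) :
    ∃ p : Ultrafilter ℕ, AP.IsIdem p ∧
      ∀ γ : AddCircle (1 : ℝ), ∃ α : AddCircle (1 : ℝ),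
        Filter.Tendsto (fun n : ℕ => round (f n) • α) (p : Filter ℕ) (nhds γ) := by
  exact Stmt16Aux.main f h1 h2 (Stmt16Aux.exists_good f h1 h2) Stmt16Aux.fs_rep
    Stmt16Aux.exists_alpha
end

section
/- Define f : ℕ → ℕ by f(∑_{i∈α} 2^i) = ∑_{i∈α} 3^i for each finite set α ⊆ ℕ₀ (i.e., reinterpret the binary expansion of n in base 3). Then for every idempotent ultrafilter p on ℕ, p-lim_m p-lim_n (f(n+m) − f(n) − f(m)) = 0; hence f is a p-almost polynomial of degree 1 for every idempotent p. -/
open Filter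

/-- The base-change function reinterpreting the binary expansion of `n` in base `3`:
`f (∑_{i ∈ α} 2^i) = ∑_{i ∈ α} 3^i`. -/
def binToTer (n : ℕ) : ℤ :=
  ∑ i ∈ Finset.range (n + 1), if n.testBit i then (3 : ℤ) ^ i else 0

section Aux

open Filter

lemma binToTer_eq_sum (n N : ℕ) (h : n < N) :
    binToTer n = ∑ i ∈ Finset.range N, if n.testBit i then (3 : ℤ) ^ i else 0 := by
  unfold binToTer
  refine Finset.sum_subset (Finset.range_subset_range.2 (by omega)) ?_
  intro i hi hni
  simp only [Finset.mem_range, not_lt] at hni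
  have : n < 2 ^ i := lt_of_lt_of_le (Nat.lt_two_pow_self (n := n)) (Nat.pow_le_pow_right (by norm_num) (by omega))
  simp [Nat.testBit_lt_two_pow this]

lemma binToTer_add {k n m : ℕ} (hn : 2 ^ k ∣ n) (hm : m < 2 ^ k) :
    binToTer (n + m) = binToTer n + binToTer m := by
  obtain ⟨q, rfl⟩ := hn
  set N := 2 ^ k * q + m + 1 with hN
  rw [binToTer_eq_sum (2 ^ k * q + m) N (by omega), binToTer_eq_sum (2 ^ k * q) N (by omega),
    binToTer_eq_sum m N (by omega), ← Finset.sum_add_distrib]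
  refine Finset.sum_congr rfl fun i _ => ?_
  have h1 := Nat.testBit_two_pow_mul_add q hm i
  have h2 := Nat.testBit_two_pow_mul_add q (Nat.two_pow_pos k) i
  simp only [Nat.add_zero] at h2
  by_cases h : i < k
  · rw [h1, h2]; simp [h]
  · have hmi : m.testBit i = false :=
      Nat.testBit_lt_two_pow (lt_of_lt_of_le hm (Nat.pow_le_pow_right (by norm_num) (not_lt.1 h)))
    rw [h1, h2]; simp [h, hmi]

lemma mem_UFAdd {p q : Ultrafilter ℕ} {A : Set ℕ} :
    A ∈ AP.UFAdd p q ↔ ∀ᶠ m in (p : Filter ℕ), ∀ᶠ n in (q : Filter ℕ), n + m ∈ A := by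
  rfl

lemma dvd_mem (p : Ultrafilter ℕ) (hp : AP.IsIdem p) (d : ℕ) (hd : 0 < d) :
    {n : ℕ | d ∣ n} ∈ p := by
  have hfin : (Set.Iio d).Finite := Set.finite_Iio d
  have hmem : Set.Iio d ∈ p.map (· % d) := by
    rw [Ultrafilter.mem_map]
    exact Filter.univ_mem' fun n => Nat.mod_lt n hd
  obtain ⟨r, hr, hpure⟩ := Ultrafilter.eq_pure_of_finite_mem hfin hmem
  have hA : {n : ℕ | n % d = r} ∈ p := by
    have : {r} ∈ p.map (· % d) := by rw [hpure]; exact rfl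
    rwa [Ultrafilter.mem_map] at this
  have hAA : {n : ℕ | n % d = r} ∈ AP.UFAdd p p := by rw [hp]; exact hA
  rw [mem_UFAdd] at hAA
  obtain ⟨m, hm1, hm2⟩ := (hAA.and hA).exists
  obtain ⟨n, hn1, hn2⟩ := (hm1.and hA).exists
  have : (r + r) % d = r := by
    have := hn1
    simp only [Set.mem_setOf_eq] at this hn2 hm2
    calc (r + r) % d = (n % d + m % d) % d := by rw [hn2, hm2]
    _ = (n + m) % d := (Nat.add_mod n m d).symm
    _ = r := this
  have hr' : r ∈ Set.Iio d := hr
  simp only [Set.mem_Iio] at hr'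
  have hr0 : r = 0 := by
    rcases lt_or_ge (r + r) d with h | h
    · rw [Nat.mod_eq_of_lt h] at this; omega
    · rw [Nat.mod_eq_sub_mod h, Nat.mod_eq_of_lt (by omega)] at this; omega
  exact Filter.mem_of_superset hA fun n hn => Nat.dvd_of_mod_eq_zero (hr0 ▸ hn)

lemma binToTer_pos {m : ℕ} (hm : 0 < m) : 0 < binToTer m := by
  obtain ⟨i, hi, -⟩ := Nat.exists_most_significant_bit (by omega : m ≠ 0)
  have hile : i < m + 1 := by
    have := Nat.ge_two_pow_of_testBit hi
    have := Nat.lt_two_pow_self (n := i)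
    omega
  refine Finset.sum_pos' (fun j _ => by positivity) ⟨i, Finset.mem_range.2 hile, ?_⟩
  simp only [hi, if_true]; positivity

/-- for every idempotent ultrafilter `p` on `ℕ`,
`p-lim_m p-lim_n (f(n+m) - f(n) - f(m)) = 0` for the binary-to-ternary base change `f`; hence
`f` is a `p`-almost polynomial of degree `1` (degree exactly `1` away from the degenerate
principal idempotent at `0`). -/
theorem stmt_17 (p : Ultrafilter ℕ) (hp : AP.IsIdem p) :
    (∀ᶠ m in (p : Filter ℕ), ∀ᶠ n in (p : Filter ℕ),
      binToTer (n + m) - binToTer n - binToTer m = 0) ∧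
    AP.APdegLE p 1 binToTer ∧
    ({n : ℕ | 0 < n} ∈ p → ¬ AP.APdegLE p 0 binToTer) := by
  have key : ∀ m : ℕ, ∀ᶠ n in (p : Filter ℕ),
      binToTer (n + m) - binToTer n - binToTer m = 0 := by
    intro m
    filter_upwards [dvd_mem p hp (2 ^ m) (Nat.two_pow_pos m)] with n hn
    rw [binToTer_add hn (Nat.lt_two_pow_self (n := m))]; ring
  refine ⟨Filter.Eventually.of_forall key, ?_, ?_⟩
  · exact Filter.Eventually.of_forall fun a =>
      ⟨0, (key a).mono fun x hx => by simpa [AP.Dbar, sub_eq_zero] using hx⟩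
  · rintro h0 ⟨c, hc⟩
    have hcc : {x : ℕ | binToTer x = c} ∈ AP.UFAdd p p := by rw [hp]; exact hc
    rw [mem_UFAdd] at hcc
    obtain ⟨m, hm1, hm2, hm3⟩ := (hcc.and (hc.and h0)).exists
    obtain ⟨n, hn1, hn2, hn3⟩ :=
      (hm1.and (hc.and (dvd_mem p hp (2 ^ m) (Nat.two_pow_pos m)))).exists
    simp only [Set.mem_setOf_eq] at hm1 hm2 hn1 hn2 hn3 hm3
    have := binToTer_add hn3 (Nat.lt_two_pow_self (n := m))
    rw [hn1, hn2, hm2] at this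
    have hc0 : c = 0 := by linarith
    have := binToTer_pos hm3
    rw [hm2, hc0] at this
    exact lt_irrefl 0 this
end Aux
end

section
/- Let a ≥ 2 and b ≥ 1 be integers and define f : ℕ → ℕ by f(n) := ∑_{i≥0} μ_i(n) b^i, where n = ∑_{i≥0} μ_i(n) a^i is the base-a expansion with digits μ_i(n) ∈ {0,…,a−1}. Then for every idempotent ultrafilter p on ℕ, p-lim_m p-lim_n (f(n+m) − f(n) − f(m)) = 0, so f is a p-almost polynomial of degree at most 1. In particular this holds for b = 1, i.e., for the base-a digit-sum function. -/
open Filter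

/-- Reinterpretation of the base-`a` expansion of `n` in base `b`:
`f n = ∑ᵢ μᵢ(n) bⁱ` where `μᵢ(n) = (n / aⁱ) % a` is the `i`-th digit of `n` base `a`. -/
def baseChange (a b : ℕ) (n : ℕ) : ℤ :=
  ∑ i ∈ Finset.range (n + 1), ((n / a ^ i) % a : ℕ) * (b : ℤ) ^ i


lemma digit_add {a k n m : ℕ} (ha : 2 ≤ a) (hn : a ^ k ∣ n) (hm : m < a ^ k) (i : ℕ) :
    ((n + m) / a ^ i) % a = n / a ^ i % a + m / a ^ i % a := by
  have hap : 0 < a := by omega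
  rcases lt_or_ge i k with hik | hik
  · have hdvd1 : a ^ (i + 1) ∣ n := dvd_trans (pow_dvd_pow a (by omega)) hn
    have hdvd0 : a ^ i ∣ n := dvd_trans (pow_dvd_pow a (by omega)) hn
    rw [Nat.add_div_of_dvd_right hdvd0]
    have h1 : a ∣ n / a ^ i := by
      rw [Nat.dvd_div_iff_mul_dvd hdvd0, ← pow_succ]
      exact hdvd1
    obtain ⟨t, ht⟩ := h1
    rw [ht, Nat.mul_add_mod, Nat.mul_mod_right, zero_add]
  · have hk : a ^ k ∣ a ^ i := pow_dvd_pow a hik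
    have hmi : m < a ^ i := lt_of_lt_of_le hm (Nat.pow_le_pow_right hap hik)
    have hmod : a ^ k ∣ n % a ^ i := (Nat.dvd_mod_iff hk).mpr hn
    have hlt : n % a ^ i + m < a ^ i := by
      obtain ⟨q, hq⟩ := hmod
      obtain ⟨r, hr⟩ := hk
      have h1 : n % a ^ i < a ^ i := Nat.mod_lt _ (by positivity)
      have hq' : q < r := by
        refine Nat.lt_of_mul_lt_mul_left (a := a ^ k) ?_
        rw [← hq, ← hr]; exact h1
      have h2 : a ^ k * q + a ^ k ≤ a ^ i := by
        have := Nat.mul_le_mul_left (a ^ k) (Nat.succ_le_of_lt hq')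
        rw [Nat.mul_succ] at this
        omega
      omega
    have hdivm : m / a ^ i = 0 := Nat.div_eq_of_lt hmi
    have heq : (n + m) / a ^ i = n / a ^ i := by
      conv_lhs => rw [← Nat.div_add_mod n (a ^ i)]
      rw [add_assoc, Nat.mul_add_div (by positivity), Nat.div_eq_of_lt hlt, add_zero]
    rw [heq, hdivm]
    simp

lemma baseChange_eq (a b : ℕ) {N n : ℕ} (ha : 2 ≤ a) (hN : n < N) :
    baseChange a b n = ∑ i ∈ Finset.range N, ((n / a ^ i) % a : ℕ) * (b : ℤ) ^ i := by
  unfold baseChange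
  apply Finset.sum_subset (Finset.range_subset_range.mpr (by omega))
  intro i hi hni
  simp only [Finset.mem_range, not_lt] at hi hni
  have h : n < a ^ i := by
    calc n < 2 ^ i := by
          calc n < 2 ^ n := Nat.lt_two_pow_self (n := n)
          _ ≤ 2 ^ i := Nat.pow_le_pow_right (by omega) (by omega)
    _ ≤ a ^ i := Nat.pow_le_pow_left ha i
  rw [Nat.div_eq_of_lt h]
  simp

lemma baseChange_add {a k n m : ℕ} (b : ℕ) (ha : 2 ≤ a) (hn : a ^ k ∣ n) (hm : m < a ^ k) :
    baseChange a b (n + m) = baseChange a b n + baseChange a b m := by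
  rw [baseChange_eq a b ha (Nat.lt_succ_of_le (le_refl (n + m))),
      baseChange_eq a b (N := n + m + 1) (n := n) ha (by omega),
      baseChange_eq a b (N := n + m + 1) (n := m) ha (by omega),
      ← Finset.sum_add_distrib]
  apply Finset.sum_congr rfl
  intro i _
  rw [digit_add ha hn hm i]
  push_cast
  ring

lemma dvd_mem_idem (p : Ultrafilter ℕ) (hp : AP.IsIdem p) {d : ℕ} (hd : 0 < d) :
    {n | d ∣ n} ∈ p := by
  haveI : NeZero d := ⟨by omega⟩
  obtain ⟨r, hr⟩ := (p.map (fun n : ℕ => (n : ZMod d))).eq_pure_of_finite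
  have hS : {n : ℕ | (n : ZMod d) = r} ∈ p := by
    have h1 : ({r} : Set (ZMod d)) ∈ p.map (fun n : ℕ => (n : ZMod d)) := by
      rw [hr]; exact Ultrafilter.mem_pure.mpr rfl
    exact Ultrafilter.mem_map.mp h1
  have hUF : {n : ℕ | (n : ZMod d) = r} ∈ AP.UFAdd p p := by rw [hp]; exact hS
  have hbind : {m : ℕ | {n : ℕ | ((n + m : ℕ) : ZMod d) = r} ∈ p} ∈ p := hUF
  obtain ⟨m, hm1, hm2⟩ := Ultrafilter.nonempty_of_mem (inter_mem hbind hS)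
  obtain ⟨n, hn1, hn2⟩ := Ultrafilter.nonempty_of_mem (inter_mem hm1 hS)
  have hr0 : r = 0 := by
    have h : ((n + m : ℕ) : ZMod d) = r := hn1
    push_cast at h
    rw [hn2, hm2] at h
    exact add_left_cancel (by rw [h, add_zero])
  have h0 : {n : ℕ | (n : ZMod d) = 0} ∈ p := hr0 ▸ hS
  filter_upwards [h0] with n hn
  exact (ZMod.natCast_eq_zero_iff n d).mp hn

/-- for `a ≥ 2`, `b ≥ 1` and every idempotent ultrafilter `p` on `ℕ`,
`p-lim_m p-lim_n (f(n+m) - f(n) - f(m)) = 0` for `f = baseChange a b`, so `f` is a `p`-almost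
polynomial of degree at most `1`; for `b = 1` this is the base-`a` digit-sum function. -/
theorem stmt_18 (a b : ℕ) (ha : 2 ≤ a) (hb : 1 ≤ b) (p : Ultrafilter ℕ) (hp : AP.IsIdem p) :
    (∀ᶠ m in (p : Filter ℕ), ∀ᶠ n in (p : Filter ℕ),
      baseChange a b (n + m) - baseChange a b n - baseChange a b m = 0) ∧
    AP.APdegLE p 1 (baseChange a b) := by
  have key : ∀ m : ℕ, ∀ᶠ n in (p : Filter ℕ),
      baseChange a b (n + m) - baseChange a b n - baseChange a b m = 0 := by
    intro m
    have hm : m < a ^ m := by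
      calc m < 2 ^ m := Nat.lt_two_pow_self (n := m)
      _ ≤ a ^ m := Nat.pow_le_pow_left ha m
    have hd := dvd_mem_idem p hp (d := a ^ m) (by positivity)
    filter_upwards [hd] with n hn
    rw [baseChange_add b ha hn hm]
    ring
  refine ⟨Filter.Eventually.of_forall key, ?_⟩
  show ∀ᶠ m in (p : Filter ℕ), AP.APdegLE p 0 (AP.Dbar m (baseChange a b))
  apply Filter.Eventually.of_forall
  intro m
  exact ⟨0, by filter_upwards [key m] with n hn; exact hn⟩
end

section
/- Let (f_i) be the Fibonacci numbers with f_0 = 1, f_1 = 2, and for n ∈ ℕ let n = ∑_i μ_i(n) f_i be its Zeckendorf expansion (μ_i(n) ∈ {0,1}, no two consecutive μ_i equal to 1). Then for every k, the set A_k := {n ∈ ℕ : μ_k(n) = 0} is an IP* set, i.e., A_k intersects every set of finite sums FS((x_i)_{i∈ℕ}) of an infinite sequence of positive integers. -/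
open Filter

namespace Stmt19

open Finset Nat

/-- nonconsecutive finsets -/
def Noncon (s : Finset ℕ) : Prop := ∀ i ∈ s, i + 1 ∉ s

lemma Noncon.subset {s t : Finset ℕ} (h : Noncon s) (hts : t ⊆ s) : Noncon t :=
  fun i hi hi1 => h i (hts hi) (hts hi1)

/-- d'Ocagne-type identity -/
lemma fib_id (m j : ℕ) :
    (Nat.fib (m + j) * Nat.fib (m + 1) : ℤ) - Nat.fib (m + j + 1) * Nat.fib m
      = (-1) ^ m * Nat.fib j := by
  induction m generalizing j with
  | zero => simp
  | succ m ih =>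
    have h1 : m + 1 + j = m + j + 1 := by ring
    have h2 : m + j + 1 + 1 = m + j + 2 := by ring
    rw [h1, h2]
    have e1 : (Nat.fib (m + j + 2) : ℤ) = Nat.fib (m + j) + Nat.fib (m + j + 1) := by
      rw [Nat.fib_add_two]; push_cast; ring
    have e2 : (Nat.fib (m + 2) : ℤ) = Nat.fib m + Nat.fib (m + 1) := by
      rw [Nat.fib_add_two]; push_cast; ring
    have := ih j
    rw [pow_succ]
    nlinarith [this, e1, e2]

lemma fib_id' (N i : ℕ) (h : i + 3 ≤ N) :
    (Nat.fib N : ℤ) * Nat.fib (i + 2)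
      = Nat.fib (N - 1) * Nat.fib (i + 3) - (-1) ^ i * Nat.fib (N - 3 - i) := by
  have h1 : (i + 2) + (N - 3 - i) = N - 1 := by omega
  have h2 : (i + 2) + (N - 3 - i) + 1 = N := by omega
  have := fib_id (i + 2) (N - 3 - i)
  rw [h1] at this
  have h2' : N - 1 + 1 = N := by omega
  rw [h2'] at this
  have h3 : ((-1 : ℤ)) ^ (i + 2) = (-1) ^ i := by rw [pow_succ, pow_succ]; ring
  rw [h3] at this
  have h4 : i + 2 + 1 = i + 3 := by ring
  rw [h4] at this
  linarith

/-- sum of fib (a+1) over a nonconsecutive set bounded by j is at most fib (j+2) -/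
lemma sum_fib_le : ∀ (j : ℕ) (t : Finset ℕ), Noncon t → (∀ a ∈ t, a ≤ j) →
    (∑ a ∈ t, Nat.fib (a + 1)) ≤ Nat.fib (j + 2) := by
  intro j
  induction j using Nat.strong_induction_on with
  | _ j ih =>
    intro t hnc hj
    rcases Nat.eq_zero_or_pos j with rfl | hjpos
    · -- t ⊆ {0}
      have : t ⊆ {0} := by intro a ha; simp [Nat.le_zero.mp (hj a ha)]
      calc (∑ a ∈ t, Nat.fib (a + 1)) ≤ ∑ a ∈ ({0} : Finset ℕ), Nat.fib (a + 1) :=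
            Finset.sum_le_sum_of_subset this
        _ = 1 := by simp
        _ ≤ Nat.fib 2 := by simp
    · by_cases hj1 : j = 1
      · subst hj1
        by_cases h1t : 1 ∈ t
        · have hsub : t ⊆ {1} := by
            intro a ha
            have := hj a ha
            interval_cases a
            · exact absurd h1t (hnc 0 ha)
            · simp
          calc (∑ a ∈ t, Nat.fib (a + 1)) ≤ ∑ a ∈ ({1} : Finset ℕ), Nat.fib (a + 1) :=
                Finset.sum_le_sum_of_subset hsub
            _ ≤ Nat.fib 3 := by simp [Nat.fib]
        · have hsub : t ⊆ {0} := by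
            intro a ha
            have := hj a ha
            interval_cases a
            · simp
            · exact absurd ha h1t
          calc (∑ a ∈ t, Nat.fib (a + 1)) ≤ ∑ a ∈ ({0} : Finset ℕ), Nat.fib (a + 1) :=
                Finset.sum_le_sum_of_subset hsub
            _ ≤ Nat.fib 3 := by simp [Nat.fib]
      by_cases hjt : j ∈ t
      · have herase : ∀ a ∈ t.erase j, a ≤ j - 2 := by
          intro a ha
          have ha' := Finset.mem_of_mem_erase ha
          have hne : a ≠ j := Finset.ne_of_mem_erase ha
          have : a ≠ j - 1 := by
            intro h
            subst h
            exact hnc (j-1) ha' (by simpa [Nat.sub_add_cancel hjpos] using hjt)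
          have := hj a ha'
          omega
        have h1 : (∑ a ∈ t.erase j, Nat.fib (a + 1)) ≤ Nat.fib (j - 2 + 2) :=
          ih (j - 2) (by omega) (t.erase j) (hnc.subset (Finset.erase_subset _ _)) herase
        have h2 : Nat.fib (j - 2 + 2) ≤ Nat.fib j := by
          apply Nat.fib_mono; omega
        have hsplit : (∑ a ∈ t, Nat.fib (a + 1))
            = Nat.fib (j + 1) + ∑ a ∈ t.erase j, Nat.fib (a + 1) :=
          (Finset.add_sum_erase _ _ hjt).symm
        rw [hsplit, Nat.fib_add_two]
        omega
      · have : ∀ a ∈ t, a ≤ j - 1 := by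
          intro a ha
          have := hj a ha
          have : a ≠ j := fun h => hjt (h ▸ ha)
          omega
        have h1 := ih (j - 1) (by omega) t hnc this
        have h2 : Nat.fib (j - 1 + 2) ≤ Nat.fib (j + 2) := by apply Nat.fib_mono; omega
        omega

/-- nat version of the key bound -/
lemma sum_fib_rev_le (N K : ℕ) (s : Finset ℕ) (hnc : Noncon s)
    (hK : ∀ i ∈ s, K ≤ i) (hN : ∀ i ∈ s, i + 4 ≤ N) (hKN : K + 4 ≤ N) :
    (∑ i ∈ s, Nat.fib (N - 3 - i)) ≤ Nat.fib (N - 2 - K) := by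
  have hinj : Set.InjOn (fun i => N - 4 - i) s := by
    intro a ha b hb hab
    have := hN a ha; have := hN b hb
    simp only at hab
    omega
  have himg : (∑ i ∈ s, Nat.fib (N - 3 - i))
      = ∑ a ∈ s.image (fun i => N - 4 - i), Nat.fib (a + 1) := by
    rw [Finset.sum_image hinj]
    apply Finset.sum_congr rfl
    intro i hi
    congr 1
    have := hN i hi
    omega
  rw [himg]
  have hnc' : Noncon (s.image (fun i => N - 4 - i)) := by
    intro a ha ha1
    simp only [Finset.mem_image] at ha ha1
    obtain ⟨i, hi, rfl⟩ := ha
    obtain ⟨i', hi', he⟩ := ha1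
    have := hN i hi; have := hN i' hi'
    have : i' = i - 1 := by omega
    subst this
    have hipos : 1 ≤ i := by omega
    exact hnc (i - 1) hi' (by simpa [Nat.sub_add_cancel hipos] using hi)
  have hb : ∀ a ∈ s.image (fun i => N - 4 - i), a ≤ N - 4 - K := by
    intro a ha
    simp only [Finset.mem_image] at ha
    obtain ⟨i, hi, rfl⟩ := ha
    have := hK i hi
    omega
  have := sum_fib_le (N - 4 - K) _ hnc' hb
  have heq : N - 4 - K + 2 = N - 2 - K := by omega
  rwa [heq] at this

/-- the integer invariant -/
def E (N : ℕ) (s : Finset ℕ) : ℤ := ∑ i ∈ s, (-1) ^ i * (Nat.fib (N - 3 - i) : ℤ)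

lemma E_abs_le (N K : ℕ) (s : Finset ℕ) (hnc : Noncon s)
    (hK : ∀ i ∈ s, K ≤ i) (hN : ∀ i ∈ s, i + 4 ≤ N) (hKN : K + 4 ≤ N) :
    |E N s| ≤ (Nat.fib (N - 2 - K) : ℤ) := by
  calc |E N s| ≤ ∑ i ∈ s, |(-1 : ℤ) ^ i * (Nat.fib (N - 3 - i) : ℤ)| :=
        Finset.abs_sum_le_sum_abs _ _
    _ = ∑ i ∈ s, (Nat.fib (N - 3 - i) : ℤ) := by
        apply Finset.sum_congr rfl
        intro i _
        rw [abs_mul, abs_pow, abs_neg, abs_one, one_pow, one_mul, abs_of_nonneg (by positivity)]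
    _ = ((∑ i ∈ s, Nat.fib (N - 3 - i) : ℕ) : ℤ) := by push_cast; rfl
    _ ≤ (Nat.fib (N - 2 - K) : ℤ) := by
        exact_mod_cast sum_fib_rev_le N K s hnc hK hN hKN


lemma E_lower (N : ℕ) (s : Finset ℕ) (hnc : Noncon s) (hne : s.Nonempty)
    (hN : ∀ i ∈ s, i + 9 ≤ N) :
    (Nat.fib (N - 4 - s.min' hne) : ℤ) ≤ |E N s| := by
  set m0 := s.min' hne with hm0
  have hm0s : m0 ∈ s := s.min'_mem hne
  have hm0le : ∀ i ∈ s, m0 ≤ i := fun i hi => s.min'_le i hi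
  have hm0N : m0 + 9 ≤ N := hN m0 hm0s
  -- erase part
  have hsplit : E N s = (-1) ^ m0 * (Nat.fib (N - 3 - m0) : ℤ)
      + ∑ i ∈ s.erase m0, (-1) ^ i * (Nat.fib (N - 3 - i) : ℤ) :=
    (Finset.add_sum_erase _ _ hm0s).symm
  have herase_ge : ∀ i ∈ s.erase m0, m0 + 2 ≤ i := by
    intro i hi
    have hi' := Finset.mem_of_mem_erase hi
    have h1 : i ≠ m0 := Finset.ne_of_mem_erase hi
    have h2 : i ≠ m0 + 1 := fun h => hnc m0 hm0s (h ▸ hi')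
    have := hm0le i hi'
    omega
  -- bound on the opposite-parity part
  have hkey : ∀ (p : ℕ → Prop) (_ : DecidablePred p) (hp : ∀ i ∈ s.erase m0, p i → m0 + 3 ≤ i),
      (∑ i ∈ (s.erase m0).filter p, (Nat.fib (N - 3 - i) : ℤ)) ≤ Nat.fib (N - 5 - m0) := by
    intro p _ hp
    have hsub : (s.erase m0).filter p ⊆ s := fun i hi =>
      Finset.mem_of_mem_erase (Finset.mem_of_mem_filter i hi)
    have := sum_fib_rev_le N (m0 + 3) ((s.erase m0).filter p) (hnc.subset hsub)
      (fun i hi => hp i (Finset.mem_of_mem_filter i hi) (Finset.mem_filter.mp hi).2)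
      (fun i hi => by have := hN i (hsub hi); omega) (by omega)
    have heq : N - 2 - (m0 + 3) = N - 5 - m0 := by omega
    rw [heq] at this
    calc (∑ i ∈ (s.erase m0).filter p, (Nat.fib (N - 3 - i) : ℤ))
        = ((∑ i ∈ (s.erase m0).filter p, Nat.fib (N - 3 - i) : ℕ) : ℤ) := by push_cast; rfl
      _ ≤ _ := by exact_mod_cast this
  have hfib3 : (Nat.fib (N - 3 - m0) : ℤ) = Nat.fib (N - 4 - m0) + Nat.fib (N - 5 - m0) := by
    have h1 : N - 3 - m0 = (N - 5 - m0) + 2 := by omega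
    have h2 : N - 4 - m0 = (N - 5 - m0) + 1 := by omega
    rw [h1, h2, Nat.fib_add_two]
    push_cast; ring
  rcases Nat.even_or_odd m0 with hev | hod
  · -- E ≥ fib (N - 4 - m0)
    have hsign : ((-1 : ℤ)) ^ m0 = 1 := Even.neg_one_pow hev
    have hub : -(∑ i ∈ s.erase m0, (-1) ^ i * (Nat.fib (N - 3 - i) : ℤ))
        ≤ Nat.fib (N - 5 - m0) := by
      rw [← Finset.sum_neg_distrib]
      calc (∑ i ∈ s.erase m0, -((-1) ^ i * (Nat.fib (N - 3 - i) : ℤ)))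
          ≤ ∑ i ∈ s.erase m0, (if Odd i then (Nat.fib (N - 3 - i) : ℤ) else 0) := by
            apply Finset.sum_le_sum
            intro i hi
            rcases Nat.even_or_odd i with h | h
            · simp [Nat.not_odd_iff_even.mpr h, Even.neg_one_pow h]
            · simp [h, Odd.neg_one_pow h]
        _ = ∑ i ∈ (s.erase m0).filter (fun i => Odd i), (Nat.fib (N - 3 - i) : ℤ) :=
            (Finset.sum_filter _ _).symm
        _ ≤ Nat.fib (N - 5 - m0) := by
            apply hkey
            intro i hi hodd
            have := herase_ge i hi
            rcases Nat.lt_or_ge i (m0 + 3) with h | h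
            · have : i = m0 + 2 := by omega
              subst this
              exact absurd hodd (by simp [Nat.odd_add, Nat.not_odd_iff_even.mpr hev]
                <;> omega)
            · exact h
    have : (Nat.fib (N - 4 - m0) : ℤ) ≤ E N s := by
      rw [hsplit, hsign, one_mul, hfib3]
      linarith
    calc (Nat.fib (N - 4 - m0) : ℤ) ≤ E N s := this
      _ ≤ |E N s| := le_abs_self _
  · -- -E ≥ fib (N - 4 - m0)
    have hsign : ((-1 : ℤ)) ^ m0 = -1 := Odd.neg_one_pow hod
    have hub : (∑ i ∈ s.erase m0, (-1) ^ i * (Nat.fib (N - 3 - i) : ℤ))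
        ≤ Nat.fib (N - 5 - m0) := by
      calc (∑ i ∈ s.erase m0, ((-1) ^ i * (Nat.fib (N - 3 - i) : ℤ)))
          ≤ ∑ i ∈ s.erase m0, (if Even i then (Nat.fib (N - 3 - i) : ℤ) else 0) := by
            apply Finset.sum_le_sum
            intro i hi
            rcases Nat.even_or_odd i with h | h
            · simp [h, Even.neg_one_pow h]
            · simp [Nat.not_even_iff_odd.mpr h, Odd.neg_one_pow h]
        _ = ∑ i ∈ (s.erase m0).filter (fun i => Even i), (Nat.fib (N - 3 - i) : ℤ) :=
            (Finset.sum_filter _ _).symm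
        _ ≤ Nat.fib (N - 5 - m0) := by
            apply hkey
            intro i hi hevn
            have := herase_ge i hi
            rcases Nat.lt_or_ge i (m0 + 3) with h | h
            · have : i = m0 + 2 := by omega
              subst this
              exact absurd hevn (by simp [Nat.even_add, Nat.not_even_iff_odd.mpr hod])
            · exact h
    have : (Nat.fib (N - 4 - m0) : ℤ) ≤ -E N s := by
      rw [hsplit, hsign, hfib3]
      linarith
    calc (Nat.fib (N - 4 - m0) : ℤ) ≤ -E N s := this
      _ ≤ |E N s| := neg_le_abs _

lemma rep_eq (N : ℕ) (s : Finset ℕ) (n : ℕ) (hsum : (n : ℤ) = ∑ i ∈ s, (Nat.fib (i + 2) : ℤ))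
    (hN : ∀ i ∈ s, i + 3 ≤ N) :
    ∃ T : ℤ, (Nat.fib N : ℤ) * n + E N s = (Nat.fib (N - 1) : ℤ) * T := by
  refine ⟨∑ i ∈ s, (Nat.fib (i + 3) : ℤ), ?_⟩
  rw [hsum, E, Finset.mul_sum, Finset.mul_sum, ← Finset.sum_add_distrib]
  apply Finset.sum_congr rfl
  intro i hi
  have := fib_id' N i (hN i hi)
  linarith


/-! ### Zeckendorf bridge -/

lemma zeck_pairwise (n : ℕ) : (Nat.zeckendorf n).Pairwise (fun a b => b + 2 ≤ a) := by
  have h := Nat.isZeckendorfRep_zeckendorf n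
  unfold List.IsZeckendorfRep at h
  have : IsTrans ℕ fun a b ↦ b + 2 ≤ a :=
    ⟨fun _a _b _c hba hcb => hcb.trans <| le_self_add.trans hba⟩
  rw [List.isChain_iff_pairwise] at h
  exact (List.pairwise_append.mp h).1

lemma zeck_two_le (n : ℕ) : ∀ a ∈ Nat.zeckendorf n, 2 ≤ a := by
  have h := Nat.isZeckendorfRep_zeckendorf n
  unfold List.IsZeckendorfRep at h
  have : IsTrans ℕ fun a b ↦ b + 2 ≤ a :=
    ⟨fun _a _b _c hba hcb => hcb.trans <| le_self_add.trans hba⟩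
  rw [List.isChain_iff_pairwise] at h
  intro a ha
  have := (List.pairwise_append.mp h).2.2 a ha 0 (by simp)
  omega

lemma zeck_nodup (n : ℕ) : (Nat.zeckendorf n).Nodup :=
  (zeck_pairwise n).imp (fun h => by omega)

/-- the canonical Zeckendorf representation as a finset of shifted indices -/
def zrep (n : ℕ) : Finset ℕ := ((Nat.zeckendorf n).toFinset).image (· - 2)

lemma mem_zrep {n i : ℕ} : i ∈ zrep n ↔ (i + 2) ∈ Nat.zeckendorf n := by
  unfold zrep
  simp only [Finset.mem_image, List.mem_toFinset]
  constructor
  · rintro ⟨a, ha, rfl⟩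
    have := zeck_two_le n a ha
    have : a - 2 + 2 = a := by omega
    rwa [this]
  · intro h
    exact ⟨i + 2, h, by omega⟩

lemma zrep_noncon (n : ℕ) : Noncon (zrep n) := by
  intro i hi hi1
  rw [mem_zrep] at hi hi1
  have hp := (zeck_pairwise n).imp (fun {a b} h => Or.inl h :
    ∀ {a b}, (b + 2 ≤ a) → (b + 2 ≤ a ∨ a + 2 ≤ b))
  have hsymm : Symmetric (fun a b : ℕ => b + 2 ≤ a ∨ a + 2 ≤ b) := by
    intro a b h; tauto
  haveI : Std.Symm (fun a b : ℕ => b + 2 ≤ a ∨ a + 2 ≤ b) := ⟨fun a b h => hsymm h⟩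
  have := hp.forall hi hi1 (by omega)
  omega

lemma zrep_sum (n : ℕ) : ∑ i ∈ zrep n, Nat.fib (i + 2) = n := by
  unfold zrep
  rw [Finset.sum_image]
  · have h1 : ∑ a ∈ (Nat.zeckendorf n).toFinset, Nat.fib (a - 2 + 2)
        = ∑ a ∈ (Nat.zeckendorf n).toFinset, Nat.fib a := by
      apply Finset.sum_congr rfl
      intro a ha
      have := zeck_two_le n a (List.mem_toFinset.mp ha)
      congr 1
      omega
    rw [h1, List.sum_toFinset _ (zeck_nodup n)]
    simpa using Nat.sum_zeckendorf_fib n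
  · intro a ha b hb hab
    have := zeck_two_le n a (List.mem_toFinset.mp ha)
    have := zeck_two_le n b (List.mem_toFinset.mp hb)
    simp only at hab
    omega

lemma rep_elt_le {s : Finset ℕ} {n : ℕ} (hsum : n = ∑ i ∈ s, Nat.fib (i + 2)) :
    ∀ i ∈ s, i ≤ n := by
  intro i hi
  have h1 : Nat.fib (i + 2) ≤ n := by
    rw [hsum]
    exact Finset.single_le_sum (f := fun i => Nat.fib (i + 2)) (fun _ _ => Nat.zero_le _) hi
  have h2 : ∀ j, j + 1 ≤ Nat.fib (j + 2) := by
    intro j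
    induction j with
    | zero => simp
    | succ j ihj =>
      have h3 : 1 ≤ Nat.fib (j + 1) := Nat.fib_pos.mpr (by omega)
      have h4 : Nat.fib (j + 3) = Nat.fib (j + 1) + Nat.fib (j + 2) := Nat.fib_add_two
      show j + 2 ≤ Nat.fib (j + 3)
      omega
  have := h2 i
  omega

/-! ### FS lemmas -/

lemma FS_prefix : ∀ (l : ℕ) (x : Stream' ℕ), (∑ i ∈ Finset.range (l + 1), x i) ∈ Hindman.FS x := by
  intro l
  induction l with
  | zero => intro x; exact Hindman.FS.head x
  | succ l ih =>
    intro x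
    rw [Finset.sum_range_succ' (f := fun i => x i)]
    have : (∑ i ∈ Finset.range (l + 1), x (i + 1)) ∈ Hindman.FS x.tail := ih x.tail
    have h := Hindman.FS.cons x _ this
    simpa [add_comm, Stream'.head, Stream'.get] using h

lemma FS_drop : ∀ (a : ℕ) (x : Stream' ℕ) (m : ℕ), m ∈ Hindman.FS (x.drop a) → m ∈ Hindman.FS x := by
  intro a
  induction a with
  | zero => intro x m h; exact h
  | succ a ih =>
    intro x m h
    exact Hindman.FS.tail x m (ih x.tail m h)

lemma FS_block (x : Stream' ℕ) (a l : ℕ) :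
    (∑ i ∈ Finset.range (l + 1), x (a + i)) ∈ Hindman.FS x := by
  apply FS_drop a x
  have heq : (∑ i ∈ Finset.range (l + 1), x (a + i))
      = ∑ i ∈ Finset.range (l + 1), (x.drop a) i := by
    apply Finset.sum_congr rfl
    intro i _
    simp [Stream'.drop, Stream'.get, Nat.add_comm]
  rw [heq]
  exact FS_prefix l (x.drop a)


theorem main (k : ℕ) (x : Stream' ℕ) (hx : ∀ i, 0 < x i) :
    ∃ n ∈ Hindman.FS x, ∀ s : Finset ℕ,
      (∀ i ∈ s, i + 1 ∉ s) → n = ∑ i ∈ s, Nat.fib (i + 2) → k ∉ s := by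
  classical
  set S : ℕ → ℕ := fun m => ∑ i ∈ Finset.range m, x i with hS
  -- pigeonhole on the low Zeckendorf window
  obtain ⟨a, b, hab, hfab⟩ := Finite.exists_ne_map_eq_of_infinite
    (fun m : ℕ => (fun i : Fin (k + 4) => decide ((i : ℕ) ∈ zrep (S m))))
  wlog hlt : a < b generalizing a b
  · exact this b a hab.symm hfab.symm (by omega)
  set n : ℕ := ∑ i ∈ Finset.range (b - a), x (a + i) with hn
  refine ⟨n, ?_, ?_⟩
  · have hba : b - a = (b - a - 1) + 1 := by omega
    rw [hn, hba]
    exact FS_block x a (b - a - 1)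
  intro s hs hsum hk
  -- setup
  set A : ℕ := S b with hA
  set B : ℕ := S a with hB
  have hABn : A = B + n := by
    rw [hA, hB, hn, hS]
    simp only
    rw [← Finset.sum_Ico_eq_sum_range (f := fun i => x i) (m := a) (n := b)]
    rw [Finset.range_eq_Ico, Finset.range_eq_Ico]
    exact (Finset.sum_Ico_consecutive (fun i : ℕ => (x i : ℕ)) (Nat.zero_le a) hlt.le).symm
  set N : ℕ := A + n + k + 12 with hN
  set sA : Finset ℕ := zrep A with hsA
  set sB : Finset ℕ := zrep B with hsB
  -- element bounds
  have hsAle : ∀ i ∈ sA, i ≤ A := rep_elt_le (zrep_sum A).symm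
  have hsBle : ∀ i ∈ sB, i ≤ B := rep_elt_le (zrep_sum B).symm
  have hsle : ∀ i ∈ s, i ≤ n := rep_elt_le hsum
  have hBA : B ≤ A := by omega
  -- the three equations
  obtain ⟨T, hT⟩ := rep_eq N s n (by exact_mod_cast congrArg (Nat.cast : ℕ → ℤ) hsum)
    (fun i hi => by have := hsle i hi; omega)
  obtain ⟨TA, hTA⟩ := rep_eq N sA A
    (by exact_mod_cast congrArg (Nat.cast : ℕ → ℤ) (zrep_sum A).symm)
    (fun i hi => by have := hsAle i hi; omega)
  obtain ⟨TB, hTB⟩ := rep_eq N sB B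
    (by exact_mod_cast congrArg (Nat.cast : ℕ → ℤ) (zrep_sum B).symm)
    (fun i hi => by have := hsBle i hi; omega)
  -- filter decomposition
  have hfil : sA.filter (fun i => i < k + 4) = sB.filter (fun i => i < k + 4) := by
    ext i
    simp only [Finset.mem_filter]
    constructor
    · rintro ⟨hi, hik⟩
      refine ⟨?_, hik⟩
      have := congrFun hfab ⟨i, hik⟩
      simp only [decide_eq_decide] at this
      exact this.mpr hi
    · rintro ⟨hi, hik⟩
      refine ⟨?_, hik⟩
      have := congrFun hfab ⟨i, hik⟩
      simp only [decide_eq_decide] at this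
      exact this.mp hi
  set hiA : Finset ℕ := sA.filter (fun i => ¬ i < k + 4) with hhiA
  set hiB : Finset ℕ := sB.filter (fun i => ¬ i < k + 4) with hhiB
  have hEA : E N sA = E N (sA.filter (fun i => i < k + 4)) + E N hiA :=
    (Finset.sum_filter_add_sum_filter_not _ _ _).symm
  have hEB : E N sB = E N (sB.filter (fun i => i < k + 4)) + E N hiB :=
    (Finset.sum_filter_add_sum_filter_not _ _ _).symm
  -- E s = E hiA - E hiB - Q * u
  set Q : ℤ := (Nat.fib (N - 1) : ℤ) with hQ
  have hkeyeq : E N s - (E N hiA - E N hiB) = Q * (T - TA + TB) := by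
    have hcast : (A : ℤ) = (B : ℤ) + (n : ℤ) := by exact_mod_cast congrArg (Nat.cast : ℕ → ℤ) hABn
    rw [hEA] at hTA
    rw [hEB] at hTB
    rw [hfil] at hTA
    nlinarith [hT, hTA, hTB, hcast]
  -- bounds
  have habsS : |E N s| ≤ (Nat.fib (N - 2) : ℤ) := by
    have := E_abs_le N 0 s hs (fun i _ => Nat.zero_le i)
      (fun i hi => by have := hsle i hi; omega) (by omega)
    simpa using this
  have habsA : |E N hiA| ≤ (Nat.fib (N - 2 - (k + 4)) : ℤ) :=
    E_abs_le N (k + 4) hiA ((zrep_noncon A).subset (Finset.filter_subset _ _))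
      (fun i hi => by have := (Finset.mem_filter.mp hi).2; omega)
      (fun i hi => by have := hsAle i (Finset.filter_subset _ _ hi); omega) (by omega)
  have habsB : |E N hiB| ≤ (Nat.fib (N - 2 - (k + 4)) : ℤ) :=
    E_abs_le N (k + 4) hiB ((zrep_noncon B).subset (Finset.filter_subset _ _))
      (fun i hi => by have := (Finset.mem_filter.mp hi).2; omega)
      (fun i hi => by have := hsBle i (Finset.filter_subset _ _ hi); omega) (by omega)
  -- fib inequalities (nat)
  have hf1 : 2 * Nat.fib (N - 2 - (k + 4)) < Nat.fib (N - k - 4) := by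
    have h1 : Nat.fib (N - 2 - (k + 4)) < Nat.fib (N - 2 - (k + 4) + 1) :=
      Nat.fib_lt_fib_succ (by omega)
    have h2 : Nat.fib (N - k - 4) = Nat.fib (N - 2 - (k + 4)) + Nat.fib (N - 2 - (k + 4) + 1) := by
      have : N - k - 4 = (N - 2 - (k + 4)) + 2 := by omega
      rw [this, Nat.fib_add_two]
    omega
  have hf2 : Nat.fib (N - k - 4) ≤ Nat.fib (N - 3) := Nat.fib_mono (by omega)
  have hf3 : Nat.fib (N - 1) = Nat.fib (N - 3) + Nat.fib (N - 2) := by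
    have e1 : N - 1 = (N - 3) + 2 := by omega
    have e2 : N - 3 + 1 = N - 2 := by omega
    rw [e1, Nat.fib_add_two, e2]
  -- u = 0
  have hu : T - TA + TB = 0 := by
    by_contra hu
    have h1 : Q ≤ |Q * (T - TA + TB)| := by
      rw [abs_mul]
      have hQpos : 0 < Q := by
        rw [hQ]
        exact_mod_cast Nat.fib_pos.mpr (by omega)
      have : (1 : ℤ) ≤ |T - TA + TB| := by
        have h0 := abs_pos.mpr hu
        omega
      calc Q = Q * 1 := by ring
        _ ≤ |Q| * |T - TA + TB| := by
            rw [abs_of_pos hQpos]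
            exact mul_le_mul_of_nonneg_left this hQpos.le
    have h2 : |Q * (T - TA + TB)| ≤ |E N s| + |E N hiA| + |E N hiB| := by
      rw [← hkeyeq]
      calc |E N s - (E N hiA - E N hiB)| ≤ |E N s| + |E N hiA - E N hiB| := abs_sub _ _
        _ ≤ |E N s| + (|E N hiA| + |E N hiB|) := by
            have := abs_sub (E N hiA) (E N hiB)
            linarith
        _ = _ := by ring
    have : (Nat.fib (N - 1) : ℤ) ≤ Nat.fib (N - 2) + (Nat.fib (N - 2 - (k + 4)))
        + (Nat.fib (N - 2 - (k + 4))) := by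
      calc (Nat.fib (N - 1) : ℤ) = Q := hQ.symm
        _ ≤ |E N s| + |E N hiA| + |E N hiB| := le_trans h1 h2
        _ ≤ _ := by linarith
    have : Nat.fib (N - 1) ≤ Nat.fib (N - 2) + Nat.fib (N - 2 - (k + 4))
        + Nat.fib (N - 2 - (k + 4)) := by exact_mod_cast this
    omega
  have hEs : E N s = E N hiA - E N hiB := by
    have := hkeyeq
    rw [hu, mul_zero] at this
    linarith
  -- upper bound on |E N s|
  have hup : |E N s| < (Nat.fib (N - k - 4) : ℤ) := by
    rw [hEs]
    calc |E N hiA - E N hiB| ≤ |E N hiA| + |E N hiB| := abs_sub _ _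
      _ ≤ (Nat.fib (N - 2 - (k + 4)) : ℤ) + (Nat.fib (N - 2 - (k + 4)) : ℤ) := by linarith
      _ < (Nat.fib (N - k - 4) : ℤ) := by exact_mod_cast (by omega : 
            Nat.fib (N - 2 - (k + 4)) + Nat.fib (N - 2 - (k + 4)) < Nat.fib (N - k - 4))
  -- lower bound
  have hne : s.Nonempty := ⟨k, hk⟩
  have hlow : (Nat.fib (N - 4 - s.min' hne) : ℤ) ≤ |E N s| :=
    E_lower N s hs hne (fun i hi => by have := hsle i hi; omega)
  have hm0k : s.min' hne ≤ k := Finset.min'_le s k hk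
  have hmono : Nat.fib (N - k - 4) ≤ Nat.fib (N - 4 - s.min' hne) := Nat.fib_mono (by omega)
  have : (Nat.fib (N - k - 4) : ℤ) ≤ |E N s| := le_trans (by exact_mod_cast hmono) hlow
  linarith

end Stmt19

/-- with Fibonacci numbers `f_0 = 1, f_1 = 2, …` (so `f_i = fib (i+2)`), for every
`k` the set `A_k = {n : μ_k(n) = 0}` of integers whose Zeckendorf expansion omits `f_k` is IP*:
it meets the set of finite sums of every infinite sequence of positive integers.  (A Zeckendorf
representation is a sum over a finite set of indices, no two consecutive; it is unique, so we
express `μ_k(n) = 0` by saying every such representation of `n` avoids the index `k`.) -/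
theorem stmt_19 (k : ℕ) (x : Stream' ℕ) (hx : ∀ i, 0 < x i) :
    ∃ n ∈ Hindman.FS x, ∀ s : Finset ℕ,
      (∀ i ∈ s, i + 1 ∉ s) → n = ∑ i ∈ s, Nat.fib (i + 2) → k ∉ s :=
  Stmt19.main k x hx
end
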